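/- arXiv:2312.04091 — 2 statements merged into one kernel-verified Lean document; each statement's English description precedes it below -/
import Mathlib

section
/- If a sequent Θ ⊢ D is derivable in ACTωm (in the fragment without 0, 1, / and ∨), then Θ ⊢ D has a basic derivation. -/
set_option linter.unusedVariables false
set_option linter.unnecessarySeqFocus false
set_option maxHeartbeats 1000000

inductive Fm : Type where
  | atom : ℕ → Fm
  | zero : Fm
  | one : Fm
  | lDiv : Fm → Fm → Fm   -- `lDiv B A` is B \ A
  | rDiv : Fm → Fm → Fm   -- `rDiv A B` is A / B
  | mul : Fm → Fm → Fm
  | and : Fm → Fm → Fm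
  | or : Fm → Fm → Fm
  | bang : Fm → Fm
  | nabla : Fm → Fm
  | star : Fm → Fm
  deriving DecidableEq


/-- Derivation trees for the fragment of ACTωm without 0, 1, / and ∨. -/
inductive DTree : List Fm → Fm → Type where
  | ax (A : Fm) : DTree [A] A
  | lDivL (Γ Pi Δ : List Fm) (A B C : Fm) :
      DTree (Γ ++ [A] ++ Δ) C → DTree Pi B → DTree (Γ ++ Pi ++ [Fm.lDiv B A] ++ Δ) C
  | lDivR (Pi : List Fm) (A B : Fm) :
      DTree (B :: Pi) A → DTree Pi (Fm.lDiv B A)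
  | mulL (Γ Δ : List Fm) (A B C : Fm) :
      DTree (Γ ++ [A, B] ++ Δ) C → DTree (Γ ++ [Fm.mul A B] ++ Δ) C
  | mulR (Γ Δ : List Fm) (A B : Fm) :
      DTree Γ A → DTree Δ B → DTree (Γ ++ Δ) (Fm.mul A B)
  | andL1 (Γ Δ : List Fm) (A₁ A₂ C : Fm) :
      DTree (Γ ++ [A₁] ++ Δ) C → DTree (Γ ++ [Fm.and A₁ A₂] ++ Δ) C
  | andL2 (Γ Δ : List Fm) (A₁ A₂ C : Fm) :
      DTree (Γ ++ [A₂] ++ Δ) C → DTree (Γ ++ [Fm.and A₁ A₂] ++ Δ) C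
  | andR (Pi : List Fm) (A₁ A₂ : Fm) :
      DTree Pi A₁ → DTree Pi A₂ → DTree Pi (Fm.and A₁ A₂)
  | bangL (n : ℕ) (Γ Δ : List Fm) (A B : Fm) :
      DTree (Γ ++ List.replicate n A ++ Δ) B → DTree (Γ ++ [Fm.bang A] ++ Δ) B
  | bangR (A B : Fm) : DTree [A] B → DTree [Fm.bang A] (Fm.bang B)
  | starL (Γ Δ : List Fm) (A B : Fm) :
      (∀ n : ℕ, DTree (Γ ++ List.replicate n A ++ Δ) B) → DTree (Γ ++ [Fm.star A] ++ Δ) B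
  | starR (Ps : List (List Fm)) (A : Fm) :
      (∀ Pi ∈ Ps, DTree Pi A) → DTree Ps.flatten (Fm.star A)
  | nablaL (Γ Δ : List Fm) (A B : Fm) :
      DTree (Γ ++ [A] ++ Δ) B → DTree (Γ ++ [Fm.nabla A] ++ Δ) B
  | nablaR (A B : Fm) : DTree [A] B → DTree [Fm.nabla A] (Fm.nabla B)
  | nablaP1 (Γ Pi Δ : List Fm) (A B : Fm) :
      DTree (Γ ++ Pi ++ [Fm.nabla A] ++ Δ) B → DTree (Γ ++ [Fm.nabla A] ++ Pi ++ Δ) B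
  | nablaP2 (Γ Pi Δ : List Fm) (A B : Fm) :
      DTree (Γ ++ [Fm.nabla A] ++ Pi ++ Δ) B → DTree (Γ ++ Pi ++ [Fm.nabla A] ++ Δ) B

/-- The last rule of the derivation tree is an application of (\L) whose principal
formula is the distinguished occurrence of `B\A` in `Γ, B\A, Δ`. -/
def EndsWithLDivLAt :
    ∀ {Θ : List Fm} {C : Fm}, DTree Θ C → List Fm → List Fm → Fm → Fm → Prop
  | _, _, DTree.lDivL Γ₀ Pi Δ' A' B' _ _ _, Γ, Δ, B, A =>
      Γ₀ ++ Pi = Γ ∧ Δ' = Δ ∧ B' = B ∧ A' = A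
  | _, _, _, _, _, _, _ => False

/-- Basic derivations (Definition 2.2 of the paper). -/
inductive Basic : ∀ {Θ : List Fm} {C : Fm}, DTree Θ C → Prop where
  | ax (A : Fm) : Basic (DTree.ax A)
  | lDivL (Γ Pi Δ : List Fm) (A B C : Fm)
      (t₁ : DTree (Γ ++ [A] ++ Δ) C) (t₂ : DTree Pi B) :
      (∀ p : ℕ, B = Fm.atom p → Pi = [Fm.atom p]) →
      Basic t₁ → Basic t₂ → Basic (DTree.lDivL Γ Pi Δ A B C t₁ t₂)
  | lDivR (Pi : List Fm) (A B : Fm) (t : DTree (B :: Pi) A) :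
      Basic t → Basic (DTree.lDivR Pi A B t)
  | mulL (Γ Δ : List Fm) (A B C : Fm) (t : DTree (Γ ++ [A, B] ++ Δ) C) :
      Basic t → Basic (DTree.mulL Γ Δ A B C t)
  | mulR (Γ Δ : List Fm) (A B : Fm) (t₁ : DTree Γ A) (t₂ : DTree Δ B) :
      (∀ p q : ℕ, A = Fm.atom p → B = Fm.atom q → Γ = [A] ∧ Δ = [B]) →
      Basic t₁ → Basic t₂ → Basic (DTree.mulR Γ Δ A B t₁ t₂)
  | andL1 (Γ Δ : List Fm) (A₁ A₂ C : Fm) (t : DTree (Γ ++ [A₁] ++ Δ) C) :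
      (∀ B A : Fm, A₁ = Fm.lDiv B A → EndsWithLDivLAt t Γ Δ B A) →
      Basic t → Basic (DTree.andL1 Γ Δ A₁ A₂ C t)
  | andL2 (Γ Δ : List Fm) (A₁ A₂ C : Fm) (t : DTree (Γ ++ [A₂] ++ Δ) C) :
      (∀ B A : Fm, A₂ = Fm.lDiv B A → EndsWithLDivLAt t Γ Δ B A) →
      Basic t → Basic (DTree.andL2 Γ Δ A₁ A₂ C t)
  | andR (Pi : List Fm) (A₁ A₂ : Fm) (t₁ : DTree Pi A₁) (t₂ : DTree Pi A₂) :
      Basic t₁ → Basic t₂ → Basic (DTree.andR Pi A₁ A₂ t₁ t₂)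
  | bangL (n : ℕ) (Γ Δ : List Fm) (A B : Fm) (t : DTree (Γ ++ List.replicate n A ++ Δ) B) :
      Basic t → Basic (DTree.bangL n Γ Δ A B t)
  | bangR (A B : Fm) (t : DTree [A] B) : Basic t → Basic (DTree.bangR A B t)
  | starL (Γ Δ : List Fm) (A B : Fm) (t : ∀ n : ℕ, DTree (Γ ++ List.replicate n A ++ Δ) B) :
      (∀ n : ℕ, Basic (t n)) → Basic (DTree.starL Γ Δ A B t)
  | starR (Ps : List (List Fm)) (A : Fm) (t : ∀ Pi ∈ Ps, DTree Pi A) :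
      (∀ (Pi : List Fm) (h : Pi ∈ Ps), Basic (t Pi h)) → Basic (DTree.starR Ps A t)
  | nablaL (Γ Δ : List Fm) (A B : Fm) (t : DTree (Γ ++ [A] ++ Δ) B) :
      Basic t → Basic (DTree.nablaL Γ Δ A B t)
  | nablaR (A B : Fm) (t : DTree [A] B) : Basic t → Basic (DTree.nablaR A B t)
  | nablaP1 (Γ Pi Δ : List Fm) (A B : Fm) (t : DTree (Γ ++ Pi ++ [Fm.nabla A] ++ Δ) B) :
      Basic t → Basic (DTree.nablaP1 Γ Pi Δ A B t)
  | nablaP2 (Γ Pi Δ : List Fm) (A B : Fm) (t : DTree (Γ ++ [Fm.nabla A] ++ Pi ++ Δ) B) :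
      Basic t → Basic (DTree.nablaP2 Γ Pi Δ A B t)

section Helpers

/-- Transport a derivation tree along an equality of antecedent lists. -/
def dcast {Θ Θ' : List Fm} {C : Fm} (h : Θ = Θ') (t : DTree Θ C) : DTree Θ' C := h ▸ t

@[simp] theorem basic_dcast {Θ Θ' : List Fm} {C : Fm} (h : Θ = Θ') (t : DTree Θ C) :
    Basic (dcast h t) ↔ Basic t := by subst h; exact Iff.rfl

@[simp] theorem ends_dcast {Θ Θ' : List Fm} {C : Fm} (h : Θ = Θ') (t : DTree Θ C)
    (Γ Δ : List Fm) (B A : Fm) :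
    EndsWithLDivLAt (dcast h t) Γ Δ B A ↔ EndsWithLDivLAt t Γ Δ B A := by
  subst h; exact Iff.rfl

@[simp] theorem ends_ax (A : Fm) (Γ Δ : List Fm) (B' A' : Fm) :
    EndsWithLDivLAt (DTree.ax A) Γ Δ B' A' ↔ False := Iff.rfl

@[simp] theorem ends_lDivL {Γ₀ Pi Δ₀ : List Fm} {A B C : Fm}
    {t₁ : DTree (Γ₀ ++ [A] ++ Δ₀) C} {t₂ : DTree Pi B} (Γ Δ : List Fm) (B' A' : Fm) :
    EndsWithLDivLAt (DTree.lDivL Γ₀ Pi Δ₀ A B C t₁ t₂) Γ Δ B' A' ↔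
      (Γ₀ ++ Pi = Γ ∧ Δ₀ = Δ ∧ B = B' ∧ A = A') := Iff.rfl

@[simp] theorem ends_lDivR {Pi : List Fm} {A B : Fm} {t : DTree (B :: Pi) A}
    (Γ Δ : List Fm) (B' A' : Fm) :
    EndsWithLDivLAt (DTree.lDivR Pi A B t) Γ Δ B' A' ↔ False := Iff.rfl

@[simp] theorem ends_mulL {Γ₀ Δ₀ : List Fm} {A B C : Fm} {t : DTree (Γ₀ ++ [A, B] ++ Δ₀) C}
    (Γ Δ : List Fm) (B' A' : Fm) :
    EndsWithLDivLAt (DTree.mulL Γ₀ Δ₀ A B C t) Γ Δ B' A' ↔ False := Iff.rfl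

@[simp] theorem ends_mulR {Γ₀ Δ₀ : List Fm} {A B : Fm} {t₁ : DTree Γ₀ A} {t₂ : DTree Δ₀ B}
    (Γ Δ : List Fm) (B' A' : Fm) :
    EndsWithLDivLAt (DTree.mulR Γ₀ Δ₀ A B t₁ t₂) Γ Δ B' A' ↔ False := Iff.rfl

@[simp] theorem ends_andL1 {Γ₀ Δ₀ : List Fm} {A₁ A₂ C : Fm} {t : DTree (Γ₀ ++ [A₁] ++ Δ₀) C}
    (Γ Δ : List Fm) (B' A' : Fm) :
    EndsWithLDivLAt (DTree.andL1 Γ₀ Δ₀ A₁ A₂ C t) Γ Δ B' A' ↔ False := Iff.rfl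

@[simp] theorem ends_andL2 {Γ₀ Δ₀ : List Fm} {A₁ A₂ C : Fm} {t : DTree (Γ₀ ++ [A₂] ++ Δ₀) C}
    (Γ Δ : List Fm) (B' A' : Fm) :
    EndsWithLDivLAt (DTree.andL2 Γ₀ Δ₀ A₁ A₂ C t) Γ Δ B' A' ↔ False := Iff.rfl

@[simp] theorem ends_andR {Pi : List Fm} {A₁ A₂ : Fm} {t₁ : DTree Pi A₁} {t₂ : DTree Pi A₂}
    (Γ Δ : List Fm) (B' A' : Fm) :
    EndsWithLDivLAt (DTree.andR Pi A₁ A₂ t₁ t₂) Γ Δ B' A' ↔ False := Iff.rfl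

@[simp] theorem ends_bangL {n : ℕ} {Γ₀ Δ₀ : List Fm} {A B : Fm}
    {t : DTree (Γ₀ ++ List.replicate n A ++ Δ₀) B} (Γ Δ : List Fm) (B' A' : Fm) :
    EndsWithLDivLAt (DTree.bangL n Γ₀ Δ₀ A B t) Γ Δ B' A' ↔ False := Iff.rfl

@[simp] theorem ends_bangR {A B : Fm} {t : DTree [A] B} (Γ Δ : List Fm) (B' A' : Fm) :
    EndsWithLDivLAt (DTree.bangR A B t) Γ Δ B' A' ↔ False := Iff.rfl

@[simp] theorem ends_starL {Γ₀ Δ₀ : List Fm} {A B : Fm}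
    {t : ∀ n : ℕ, DTree (Γ₀ ++ List.replicate n A ++ Δ₀) B} (Γ Δ : List Fm) (B' A' : Fm) :
    EndsWithLDivLAt (DTree.starL Γ₀ Δ₀ A B t) Γ Δ B' A' ↔ False := Iff.rfl

@[simp] theorem ends_starR {Ps : List (List Fm)} {A : Fm} {t : ∀ Pi ∈ Ps, DTree Pi A}
    (Γ Δ : List Fm) (B' A' : Fm) :
    EndsWithLDivLAt (DTree.starR Ps A t) Γ Δ B' A' ↔ False := Iff.rfl

@[simp] theorem ends_nablaL {Γ₀ Δ₀ : List Fm} {A B : Fm} {t : DTree (Γ₀ ++ [A] ++ Δ₀) B}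
    (Γ Δ : List Fm) (B' A' : Fm) :
    EndsWithLDivLAt (DTree.nablaL Γ₀ Δ₀ A B t) Γ Δ B' A' ↔ False := Iff.rfl

@[simp] theorem ends_nablaR {A B : Fm} {t : DTree [A] B} (Γ Δ : List Fm) (B' A' : Fm) :
    EndsWithLDivLAt (DTree.nablaR A B t) Γ Δ B' A' ↔ False := Iff.rfl

@[simp] theorem ends_nablaP1 {Γ₀ Pi Δ₀ : List Fm} {A B : Fm}
    {t : DTree (Γ₀ ++ Pi ++ [Fm.nabla A] ++ Δ₀) B} (Γ Δ : List Fm) (B' A' : Fm) :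
    EndsWithLDivLAt (DTree.nablaP1 Γ₀ Pi Δ₀ A B t) Γ Δ B' A' ↔ False := Iff.rfl

@[simp] theorem ends_nablaP2 {Γ₀ Pi Δ₀ : List Fm} {A B : Fm}
    {t : DTree (Γ₀ ++ [Fm.nabla A] ++ Pi ++ Δ₀) B} (Γ Δ : List Fm) (B' A' : Fm) :
    EndsWithLDivLAt (DTree.nablaP2 Γ₀ Pi Δ₀ A B t) Γ Δ B' A' ↔ False := Iff.rfl

/-- Splitting an append equation around a distinguished middle element. -/
theorem split2 {X Y Γ Δ : List Fm} {F : Fm} (h : X ++ Y = Γ ++ [F] ++ Δ) :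
    (∃ G, X = Γ ++ [F] ++ G ∧ Δ = G ++ Y) ∨ (∃ G, Y = G ++ [F] ++ Δ ∧ Γ = X ++ G) := by
  rw [List.append_assoc] at h
  rcases List.append_eq_append_iff.1 h with ⟨a', ha1, ha2⟩ | ⟨c', hc1, hc2⟩
  · right
    rcases a' with _ | ⟨x, a''⟩
    · exact ⟨[], by simpa using ha2, by simpa using ha1⟩
    · exact ⟨x :: a'', by simpa using ha2, by simpa using ha1⟩
  · rcases c' with _ | ⟨x, c''⟩
    · right; exact ⟨[], by simpa using hc2.symm, by simpa using hc1.symm⟩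
    · left
      obtain ⟨rfl, rfl⟩ : F = x ∧ Δ = c'' ++ Y := by
        have := hc2.symm
        simp at this
        exact ⟨this.1.symm, this.2.symm⟩
      exact ⟨c'', by simpa using hc1, rfl⟩

theorem split3' {Γ₀ Δ₀ Γ Δ : List Fm} {P F : Fm} (h : Γ₀ ++ [P] ++ Δ₀ = Γ ++ [F] ++ Δ) :
    (∃ G, Γ₀ = Γ ++ [F] ++ G ∧ Δ = G ++ [P] ++ Δ₀) ∨
    (Γ₀ = Γ ∧ P = F ∧ Δ₀ = Δ) ∨
    (∃ G, Δ₀ = G ++ [F] ++ Δ ∧ Γ = Γ₀ ++ [P] ++ G) := by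
  have h' : Γ₀ ++ ([P] ++ Δ₀) = Γ ++ [F] ++ Δ := by simpa [List.append_assoc] using h
  rcases split2 h' with ⟨G, h1, h2⟩ | ⟨G, h1, h2⟩
  · left; exact ⟨G, h1, by simpa [List.append_assoc] using h2⟩
  · rcases G with _ | ⟨x, G'⟩
    · right; left
      have := h1
      simp at this
      exact ⟨by simpa using h2.symm, this.1, this.2⟩
    · right; right
      have hx : P = x ∧ Δ₀ = G' ++ [F] ++ Δ := by
        have := h1
        simp only [List.cons_append, List.nil_append, List.append_assoc,
          List.cons.injEq] at this
        exact ⟨this.1, by simp [this.2]⟩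
      rcases hx with ⟨rfl, h3⟩
      exact ⟨G', h3, by simpa using h2⟩

theorem split3 {Γ₀ Δ₀ Γ Δ : List Fm} {P F : Fm} (h : Γ₀ ++ [P] ++ Δ₀ = Γ ++ [F] ++ Δ)
    (hne : P ≠ F) :
    (∃ G, Γ₀ = Γ ++ [F] ++ G ∧ Δ = G ++ [P] ++ Δ₀) ∨
    (∃ G, Δ₀ = G ++ [F] ++ Δ ∧ Γ = Γ₀ ++ [P] ++ G) := by
  rcases split3' h with h' | ⟨_, h', _⟩ | h'
  · exact Or.inl h'
  · exact absurd h' hne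
  · exact Or.inr h'

theorem flatten_split {Ps : List (List Fm)} {Γ Δ : List Fm} {F : Fm}
    (h : Ps.flatten = Γ ++ [F] ++ Δ) :
    ∃ Ps₁ G₁ G₂ Ps₂, Ps = Ps₁ ++ (G₁ ++ [F] ++ G₂) :: Ps₂ ∧
      Γ = Ps₁.flatten ++ G₁ ∧ Δ = G₂ ++ Ps₂.flatten := by
  induction Ps generalizing Γ with
  | nil =>
      exfalso
      have := congrArg List.length h
      simp at this
  | cons L Ps' ih =>
      rw [List.flatten_cons] at h
      rcases split2 h with ⟨G, h1, h2⟩ | ⟨G, h1, h2⟩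
      · exact ⟨[], Γ, G, Ps', by simp [h1], by simp, h2⟩
      · obtain ⟨Ps₁, G₁, G₂, Ps₂, e1, e2, e3⟩ := ih h1
        exact ⟨L :: Ps₁, G₁, G₂, Ps₂, by simp [e1], by simp [h2, e2], e3⟩

end Helpers

/-- Cut with an atomic cut formula, pushed into the left premise.
Preserves basicness, and records how "ends with (\L)" positions shift. -/
theorem lemA {p : ℕ} :
    ∀ {Pi : List Fm} {X : Fm} {t : DTree Pi X}, Basic t → X = Fm.atom p →
    ∀ (Γ Δ : List Fm) (C : Fm) {s : DTree (Γ ++ [Fm.atom p] ++ Δ) C}, Basic s →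
    ∃ t' : DTree (Γ ++ Pi ++ Δ) C, Basic t' ∧
      ∀ Γ₀ Δ₀ B₀ A₀, EndsWithLDivLAt t Γ₀ Δ₀ B₀ A₀ →
        EndsWithLDivLAt t' (Γ ++ Γ₀) (Δ₀ ++ Δ) B₀ A₀ := by
  intro Pi X t hb
  induction hb with
  | ax A' =>
      intro hX Γ Δ C s hs
      subst hX
      exact ⟨s, hs, by intro _ _ _ _ h; simp at h⟩
  | lDivL Γ' Pi' Δ' A' B' C' t₁ t₂ cond hb₁ hb₂ ih₁ ih₂ =>
      intro hX Γ Δ C s hs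
      subst hX
      obtain ⟨t₁', h₁, hp₁⟩ := ih₁ rfl Γ Δ C hs
      have h1 : Γ ++ (Γ' ++ [A'] ++ Δ') ++ Δ = (Γ ++ Γ') ++ [A'] ++ (Δ' ++ Δ) := by simp
      have h2 : (Γ ++ Γ') ++ Pi' ++ [Fm.lDiv B' A'] ++ (Δ' ++ Δ) =
          Γ ++ (Γ' ++ Pi' ++ [Fm.lDiv B' A'] ++ Δ') ++ Δ := by simp
      refine ⟨dcast h2 (DTree.lDivL _ _ _ _ _ _ (dcast h1 t₁') t₂), ?_, ?_⟩
      · rw [basic_dcast]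
        exact Basic.lDivL _ _ _ _ _ _ _ _ cond ((basic_dcast _ _).2 h₁) hb₂
      · intro Γ₀ Δ₀ B₀ A₀ h
        rw [ends_lDivL] at h
        obtain ⟨e1, e2, e3, e4⟩ := h
        subst e1; subst e2; subst e3; subst e4
        rw [ends_dcast, ends_lDivL]
        exact ⟨by simp, rfl, rfl, rfl⟩
  | lDivR Pi' A' B' t₁ hb₁ ih₁ =>
      intro hX; simp at hX
  | mulL Γ' Δ' A' B' C' t₁ hb₁ ih₁ =>
      intro hX Γ Δ C s hs
      subst hX
      obtain ⟨t₁', h₁, hp₁⟩ := ih₁ rfl Γ Δ C hs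
      have h1 : Γ ++ (Γ' ++ [A', B'] ++ Δ') ++ Δ = (Γ ++ Γ') ++ [A', B'] ++ (Δ' ++ Δ) := by simp
      have h2 : (Γ ++ Γ') ++ [Fm.mul A' B'] ++ (Δ' ++ Δ) =
          Γ ++ (Γ' ++ [Fm.mul A' B'] ++ Δ') ++ Δ := by simp
      refine ⟨dcast h2 (DTree.mulL _ _ _ _ _ (dcast h1 t₁')), ?_, ?_⟩
      · rw [basic_dcast]
        exact Basic.mulL _ _ _ _ _ _ ((basic_dcast _ _).2 h₁)
      · intro _ _ _ _ h; simp at h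
  | mulR Γ' Δ' A' B' t₁ t₂ cond hb₁ hb₂ ih₁ ih₂ =>
      intro hX; simp at hX
  | andL1 Γ' Δ' A₁ A₂ C' t₁ cond hb₁ ih₁ =>
      intro hX Γ Δ C s hs
      subst hX
      obtain ⟨t₁', h₁, hp₁⟩ := ih₁ rfl Γ Δ C hs
      have h1 : Γ ++ (Γ' ++ [A₁] ++ Δ') ++ Δ = (Γ ++ Γ') ++ [A₁] ++ (Δ' ++ Δ) := by simp
      have h2 : (Γ ++ Γ') ++ [Fm.and A₁ A₂] ++ (Δ' ++ Δ) =
          Γ ++ (Γ' ++ [Fm.and A₁ A₂] ++ Δ') ++ Δ := by simp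
      refine ⟨dcast h2 (DTree.andL1 _ _ _ _ _ (dcast h1 t₁')), ?_, ?_⟩
      · rw [basic_dcast]
        refine Basic.andL1 _ _ _ _ _ _ ?_ ((basic_dcast _ _).2 h₁)
        intro Bx Ax hx
        rw [ends_dcast]
        exact hp₁ _ _ _ _ (cond Bx Ax hx)
      · intro _ _ _ _ h; simp at h
  | andL2 Γ' Δ' A₁ A₂ C' t₁ cond hb₁ ih₁ =>
      intro hX Γ Δ C s hs
      subst hX
      obtain ⟨t₁', h₁, hp₁⟩ := ih₁ rfl Γ Δ C hs
      have h1 : Γ ++ (Γ' ++ [A₂] ++ Δ') ++ Δ = (Γ ++ Γ') ++ [A₂] ++ (Δ' ++ Δ) := by simp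
      have h2 : (Γ ++ Γ') ++ [Fm.and A₁ A₂] ++ (Δ' ++ Δ) =
          Γ ++ (Γ' ++ [Fm.and A₁ A₂] ++ Δ') ++ Δ := by simp
      refine ⟨dcast h2 (DTree.andL2 _ _ _ _ _ (dcast h1 t₁')), ?_, ?_⟩
      · rw [basic_dcast]
        refine Basic.andL2 _ _ _ _ _ _ ?_ ((basic_dcast _ _).2 h₁)
        intro Bx Ax hx
        rw [ends_dcast]
        exact hp₁ _ _ _ _ (cond Bx Ax hx)
      · intro _ _ _ _ h; simp at h
  | andR Pi' A₁ A₂ t₁ t₂ hb₁ hb₂ ih₁ ih₂ =>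
      intro hX; simp at hX
  | bangL n Γ' Δ' A' B' t₁ hb₁ ih₁ =>
      intro hX Γ Δ C s hs
      subst hX
      obtain ⟨t₁', h₁, hp₁⟩ := ih₁ rfl Γ Δ C hs
      have h1 : Γ ++ (Γ' ++ List.replicate n A' ++ Δ') ++ Δ =
          (Γ ++ Γ') ++ List.replicate n A' ++ (Δ' ++ Δ) := by simp
      have h2 : (Γ ++ Γ') ++ [Fm.bang A'] ++ (Δ' ++ Δ) =
          Γ ++ (Γ' ++ [Fm.bang A'] ++ Δ') ++ Δ := by simp
      refine ⟨dcast h2 (DTree.bangL n _ _ _ _ (dcast h1 t₁')), ?_, ?_⟩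
      · rw [basic_dcast]
        exact Basic.bangL _ _ _ _ _ _ ((basic_dcast _ _).2 h₁)
      · intro _ _ _ _ h; simp at h
  | bangR A' B' t₁ hb₁ ih₁ =>
      intro hX; simp at hX
  | starL Γ' Δ' A' B' tf hbf ihf =>
      intro hX Γ Δ C s hs
      subst hX
      choose f hf hfp using fun n => ihf n rfl Γ Δ C hs
      have h1 : ∀ n, Γ ++ (Γ' ++ List.replicate n A' ++ Δ') ++ Δ =
          (Γ ++ Γ') ++ List.replicate n A' ++ (Δ' ++ Δ) := fun n => by simp
      have h2 : (Γ ++ Γ') ++ [Fm.star A'] ++ (Δ' ++ Δ) =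
          Γ ++ (Γ' ++ [Fm.star A'] ++ Δ') ++ Δ := by simp
      refine ⟨dcast h2 (DTree.starL _ _ _ _ (fun n => dcast (h1 n) (f n))), ?_, ?_⟩
      · rw [basic_dcast]
        exact Basic.starL _ _ _ _ _ (fun n => (basic_dcast _ _).2 (hf n))
      · intro _ _ _ _ h; simp at h
  | starR Ps A' tf hbf ihf =>
      intro hX; simp at hX
  | nablaL Γ' Δ' A' B' t₁ hb₁ ih₁ =>
      intro hX Γ Δ C s hs
      subst hX
      obtain ⟨t₁', h₁, hp₁⟩ := ih₁ rfl Γ Δ C hs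
      have h1 : Γ ++ (Γ' ++ [A'] ++ Δ') ++ Δ = (Γ ++ Γ') ++ [A'] ++ (Δ' ++ Δ) := by simp
      have h2 : (Γ ++ Γ') ++ [Fm.nabla A'] ++ (Δ' ++ Δ) =
          Γ ++ (Γ' ++ [Fm.nabla A'] ++ Δ') ++ Δ := by simp
      refine ⟨dcast h2 (DTree.nablaL _ _ _ _ (dcast h1 t₁')), ?_, ?_⟩
      · rw [basic_dcast]
        exact Basic.nablaL _ _ _ _ _ ((basic_dcast _ _).2 h₁)
      · intro _ _ _ _ h; simp at h
  | nablaR A' B' t₁ hb₁ ih₁ =>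
      intro hX; simp at hX
  | nablaP1 Γ' Pi' Δ' A' B' t₁ hb₁ ih₁ =>
      intro hX Γ Δ C s hs
      subst hX
      obtain ⟨t₁', h₁, hp₁⟩ := ih₁ rfl Γ Δ C hs
      have h1 : Γ ++ (Γ' ++ Pi' ++ [Fm.nabla A'] ++ Δ') ++ Δ =
          (Γ ++ Γ') ++ Pi' ++ [Fm.nabla A'] ++ (Δ' ++ Δ) := by simp
      have h2 : (Γ ++ Γ') ++ [Fm.nabla A'] ++ Pi' ++ (Δ' ++ Δ) =
          Γ ++ (Γ' ++ [Fm.nabla A'] ++ Pi' ++ Δ') ++ Δ := by simp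
      refine ⟨dcast h2 (DTree.nablaP1 _ _ _ _ _ (dcast h1 t₁')), ?_, ?_⟩
      · rw [basic_dcast]
        exact Basic.nablaP1 _ _ _ _ _ _ ((basic_dcast _ _).2 h₁)
      · intro _ _ _ _ h; simp at h
  | nablaP2 Γ' Pi' Δ' A' B' t₁ hb₁ ih₁ =>
      intro hX Γ Δ C s hs
      subst hX
      obtain ⟨t₁', h₁, hp₁⟩ := ih₁ rfl Γ Δ C hs
      have h1 : Γ ++ (Γ' ++ [Fm.nabla A'] ++ Pi' ++ Δ') ++ Δ =
          (Γ ++ Γ') ++ [Fm.nabla A'] ++ Pi' ++ (Δ' ++ Δ) := by simp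
      have h2 : (Γ ++ Γ') ++ Pi' ++ [Fm.nabla A'] ++ (Δ' ++ Δ) =
          Γ ++ (Γ' ++ Pi' ++ [Fm.nabla A'] ++ Δ') ++ Δ := by simp
      refine ⟨dcast h2 (DTree.nablaP2 _ _ _ _ _ (dcast h1 t₁')), ?_, ?_⟩
      · rw [basic_dcast]
        exact Basic.nablaP2 _ _ _ _ _ _ ((basic_dcast _ _).2 h₁)
      · intro _ _ _ _ h; simp at h

/-- Basic introduction of a conjunction whose distinguished conjunct `B\A`
is principal in an immediately preceding `(\L)`. -/
theorem basicAndIntro {B A X E : Fm}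
    (hE : E = Fm.and (Fm.lDiv B A) X ∨ E = Fm.and X (Fm.lDiv B A))
    {Γ' Pi Δ : List Fm} {C : Fm}
    (t₁ : DTree (Γ' ++ [A] ++ Δ) C) (t₂ : DTree Pi B)
    (cond : ∀ p, B = Fm.atom p → Pi = [Fm.atom p])
    (hb₁ : Basic t₁) (hb₂ : Basic t₂) :
    ∃ t' : DTree ((Γ' ++ Pi) ++ [E] ++ Δ) C, Basic t' := by
  have h : Γ' ++ Pi ++ [Fm.lDiv B A] ++ Δ = (Γ' ++ Pi) ++ [Fm.lDiv B A] ++ Δ := by simp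
  rcases hE with rfl | rfl
  · refine ⟨DTree.andL1 (Γ' ++ Pi) Δ _ X C (dcast h (DTree.lDivL Γ' Pi Δ A B C t₁ t₂)), ?_⟩
    refine Basic.andL1 _ _ _ _ _ _ ?_
      ((basic_dcast _ _).2 (Basic.lDivL _ _ _ _ _ _ _ _ cond hb₁ hb₂))
    intro B₀ A₀ hx
    injection hx with f1 f2
    subst f1; subst f2
    rw [ends_dcast, ends_lDivL]
    exact ⟨rfl, rfl, rfl, rfl⟩
  · refine ⟨DTree.andL2 (Γ' ++ Pi) Δ X _ C (dcast h (DTree.lDivL Γ' Pi Δ A B C t₁ t₂)), ?_⟩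
    refine Basic.andL2 _ _ _ _ _ _ ?_
      ((basic_dcast _ _).2 (Basic.lDivL _ _ _ _ _ _ _ _ cond hb₁ hb₂))
    intro B₀ A₀ hx
    injection hx with f1 f2
    subst f1; subst f2
    rw [ends_dcast, ends_lDivL]
    exact ⟨rfl, rfl, rfl, rfl⟩

/-- A basic derivation of `(B\A) ∧ X ⊢ B\A` (resp. `X ∧ (B\A) ⊢ B\A`). -/
theorem axCase {B A X E : Fm}
    (hE : E = Fm.and (Fm.lDiv B A) X ∨ E = Fm.and X (Fm.lDiv B A)) :
    ∃ t' : DTree [E] (Fm.lDiv B A), Basic t' := by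
  have hbInner : Basic (DTree.lDivL [] [B] [] A B A (DTree.ax A) (DTree.ax B)) :=
    Basic.lDivL _ _ _ _ _ _ _ _ (fun p hp => by rw [hp]) (Basic.ax A) (Basic.ax B)
  rcases hE with rfl | rfl
  · refine ⟨DTree.lDivR _ A B (DTree.andL1 [B] [] (Fm.lDiv B A) X A
      (DTree.lDivL [] [B] [] A B A (DTree.ax A) (DTree.ax B))), ?_⟩
    refine Basic.lDivR _ _ _ _ (Basic.andL1 _ _ _ _ _ _ ?_ hbInner)
    intro B₀ A₀ hx
    injection hx with f1 f2
    subst f1; subst f2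
    rw [ends_lDivL]
    exact ⟨rfl, rfl, rfl, rfl⟩
  · refine ⟨DTree.lDivR _ A B (DTree.andL2 [B] [] X (Fm.lDiv B A) A
      (DTree.lDivL [] [B] [] A B A (DTree.ax A) (DTree.ax B))), ?_⟩
    refine Basic.lDivR _ _ _ _ (Basic.andL2 _ _ _ _ _ _ ?_ hbInner)
    intro B₀ A₀ hx
    injection hx with f1 f2
    subst f1; subst f2
    rw [ends_lDivL]
    exact ⟨rfl, rfl, rfl, rfl⟩

/-- Replacing an antecedent occurrence of `B\A` by a conjunction having it as a
conjunct, preserving basicness and recording how "ends with (\L)" shifts. -/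
theorem lemB {B A X E : Fm}
    (hE : E = Fm.and (Fm.lDiv B A) X ∨ E = Fm.and X (Fm.lDiv B A)) :
    ∀ {Θ : List Fm} {C : Fm} {t : DTree Θ C}, Basic t →
    ∀ Γ Δ, Θ = Γ ++ [Fm.lDiv B A] ++ Δ →
    ∃ t' : DTree (Γ ++ [E] ++ Δ) C, Basic t' ∧
      (∀ Γ₂ Δ₀ B₀ A₀, EndsWithLDivLAt t (Γ ++ [Fm.lDiv B A] ++ Γ₂) Δ₀ B₀ A₀ →
        EndsWithLDivLAt t' (Γ ++ [E] ++ Γ₂) Δ₀ B₀ A₀) ∧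
      (∀ Γ₀ Δ₂ B₀ A₀, EndsWithLDivLAt t Γ₀ (Δ₂ ++ [Fm.lDiv B A] ++ Δ) B₀ A₀ →
        EndsWithLDivLAt t' Γ₀ (Δ₂ ++ [E] ++ Δ) B₀ A₀) := by
  intro Θ C t hb
  induction hb with
  | ax A₀ =>
      intro Γ Δ hΘ
      rcases Γ with _ | ⟨g, Γt⟩
      · simp at hΘ
        obtain ⟨rfl, rfl⟩ := hΘ
        obtain ⟨w, hw⟩ := axCase hE
        exact ⟨dcast (by simp) w, (basic_dcast _ _).2 hw,
          by intro _ _ _ _ h; simp at h, by intro _ _ _ _ h; simp at h⟩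
      · exfalso
        have := congrArg List.length hΘ
        simp only [List.length_append, List.length_cons, List.length_nil] at this
        omega
  | lDivL Γ' Pi' Δ' A' B' C' t₁ t₂ cond hb₁ hb₂ ih₁ ih₂ =>
      intro Γ Δ hΘ
      have hΘ' : (Γ' ++ Pi') ++ [Fm.lDiv B' A'] ++ Δ' = Γ ++ [Fm.lDiv B A] ++ Δ := by
        simpa [List.append_assoc] using hΘ
      rcases split3' hΘ' with ⟨G, hG1, hG2⟩ | ⟨e1, e2, e3⟩ | ⟨G, hG1, hG2⟩
      · -- occurrence strictly left of the principal formula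
        subst hG2
        rcases split2 hG1 with ⟨G₂, hA1, hA2⟩ | ⟨G₂, hA1, hA2⟩
        · -- occurrence inside Γ'
          subst hA2; subst hA1
          obtain ⟨t₁', hb₁', p1, p2⟩ := ih₁ Γ (G₂ ++ [A'] ++ Δ') (by simp)
          refine ⟨dcast (by simp) (DTree.lDivL (Γ ++ [E] ++ G₂) Pi' Δ' A' B' C'
            (dcast (by simp) t₁') t₂), ?_, ?_, ?_⟩
          · rw [basic_dcast]
            exact Basic.lDivL _ _ _ _ _ _ _ _ cond ((basic_dcast _ _).2 hb₁') hb₂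
          · intro Γ₂ Δ₀ B₀ A₀ h
            rw [ends_lDivL] at h
            obtain ⟨e1, e2, e3, e4⟩ := h
            simp at e1
            rw [ends_dcast, ends_lDivL]
            exact ⟨by simp [e1], e2, e3, e4⟩
          · intro Γ₀ Δ₂ B₀ A₀ h
            rw [ends_lDivL] at h
            exfalso
            have := congrArg List.length h.2.1
            simp only [List.length_append, List.length_cons, List.length_nil] at this
            omega
        · -- occurrence inside Pi'
          subst hA1; subst hA2
          obtain ⟨t₂', hb₂', _, _⟩ := ih₂ G₂ G rfl
          refine ⟨dcast (by simp) (DTree.lDivL Γ' (G₂ ++ [E] ++ G) Δ' A' B' C'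
            t₁ t₂'), ?_, ?_, ?_⟩
          · rw [basic_dcast]
            refine Basic.lDivL _ _ _ _ _ _ _ _ ?_ hb₁ hb₂'
            intro p hp
            exfalso
            have hc := cond p hp
            have hm : Fm.lDiv B A ∈ [Fm.atom p] := by rw [← hc]; simp
            simp at hm
          · intro Γ₂ Δ₀ B₀ A₀ h
            rw [ends_lDivL] at h
            obtain ⟨e1, e2, e3, e4⟩ := h
            simp at e1
            rw [ends_dcast, ends_lDivL]
            exact ⟨by simp [e1], e2, e3, e4⟩
          · intro Γ₀ Δ₂ B₀ A₀ h
            rw [ends_lDivL] at h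
            exfalso
            have := congrArg List.length h.2.1
            simp only [List.length_append, List.length_cons, List.length_nil] at this
            omega
      · -- the occurrence is principal: insert the conjunction rule
        injection e2 with f1 f2
        subst f1; subst f2; subst e3; subst e1
        obtain ⟨w, hw⟩ := basicAndIntro hE t₁ t₂ cond hb₁ hb₂
        refine ⟨w, hw, ?_, ?_⟩
        · intro Γ₂ Δ₀ B₀ A₀ h
          rw [ends_lDivL] at h
          exfalso
          have := congrArg List.length h.1
          simp only [List.length_append, List.length_cons, List.length_nil] at this
          omega
        · intro Γ₀ Δ₂ B₀ A₀ h
          rw [ends_lDivL] at h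
          exfalso
          have := congrArg List.length h.2.1
          simp only [List.length_append, List.length_cons, List.length_nil] at this
          omega
      · -- occurrence strictly right of the principal formula
        subst hG1; subst hG2
        obtain ⟨t₁', hb₁', p1, p2⟩ := ih₁ (Γ' ++ [A'] ++ G) Δ (by simp)
        refine ⟨dcast (by simp) (DTree.lDivL Γ' Pi' (G ++ [E] ++ Δ) A' B' C'
          (dcast (by simp) t₁') t₂), ?_, ?_, ?_⟩
        · rw [basic_dcast]
          exact Basic.lDivL _ _ _ _ _ _ _ _ cond ((basic_dcast _ _).2 hb₁') hb₂
        · intro Γ₂ Δ₀ B₀ A₀ h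
          rw [ends_lDivL] at h
          exfalso
          have := congrArg List.length h.1
          simp only [List.length_append, List.length_cons, List.length_nil] at this
          omega
        · intro Γ₀ Δ₂ B₀ A₀ h
          rw [ends_lDivL] at h
          obtain ⟨e1, e2, e3, e4⟩ := h
          simp at e2
          rw [ends_dcast, ends_lDivL]
          exact ⟨e1, by simp [e2], e3, e4⟩
  | lDivR Pi' A' B' t₁ hb₁ ih₁ =>
      intro Γ Δ hΘ
      subst hΘ
      obtain ⟨t₁', hb₁', _, _⟩ := ih₁ (B' :: Γ) Δ (by simp)
      refine ⟨DTree.lDivR _ A' B' (dcast (by simp) t₁'), ?_, ?_, ?_⟩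
      · exact Basic.lDivR _ _ _ _ ((basic_dcast _ _).2 hb₁')
      · intro _ _ _ _ h; simp at h
      · intro _ _ _ _ h; simp at h
  | mulL Γ' Δ' A' B' C' t₁ hb₁ ih₁ =>
      intro Γ Δ hΘ
      rcases split3 hΘ (fun h => Fm.noConfusion h) with ⟨G, hG1, hG2⟩ | ⟨G, hG1, hG2⟩
      · subst hG1; subst hG2
        obtain ⟨t₁', hb₁', _, _⟩ := ih₁ Γ (G ++ [A', B'] ++ Δ') (by simp)
        refine ⟨dcast (by simp) (DTree.mulL (Γ ++ [E] ++ G) Δ' A' B' C'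
          (dcast (by simp) t₁')), ?_, ?_, ?_⟩
        · rw [basic_dcast]
          exact Basic.mulL _ _ _ _ _ _ ((basic_dcast _ _).2 hb₁')
        · intro _ _ _ _ h; simp at h
        · intro _ _ _ _ h; simp at h
      · subst hG1; subst hG2
        obtain ⟨t₁', hb₁', _, _⟩ := ih₁ (Γ' ++ [A', B'] ++ G) Δ (by simp)
        refine ⟨dcast (by simp) (DTree.mulL Γ' (G ++ [E] ++ Δ) A' B' C'
          (dcast (by simp) t₁')), ?_, ?_, ?_⟩
        · rw [basic_dcast]
          exact Basic.mulL _ _ _ _ _ _ ((basic_dcast _ _).2 hb₁')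
        · intro _ _ _ _ h; simp at h
        · intro _ _ _ _ h; simp at h
  | mulR Γ₁ Δ₁ A' B' t₁ t₂ cond hb₁ hb₂ ih₁ ih₂ =>
      intro Γ Δ hΘ
      rcases split2 hΘ with ⟨G, hA1, hA2⟩ | ⟨G, hA1, hA2⟩
      · subst hA1; subst hA2
        obtain ⟨t₁', hb₁', _, _⟩ := ih₁ Γ G rfl
        refine ⟨dcast (by simp) (DTree.mulR (Γ ++ [E] ++ G) Δ₁ A' B' t₁' t₂), ?_, ?_, ?_⟩
        · rw [basic_dcast]
          refine Basic.mulR _ _ _ _ _ _ ?_ hb₁' hb₂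
          intro p q hp hq
          exfalso
          have hc := (cond p q hp hq).1
          have hm : Fm.lDiv B A ∈ [A'] := by rw [← hc]; simp
          simp [hp] at hm
        · intro _ _ _ _ h; simp at h
        · intro _ _ _ _ h; simp at h
      · subst hA1; subst hA2
        obtain ⟨t₂', hb₂', _, _⟩ := ih₂ G Δ rfl
        refine ⟨dcast (by simp) (DTree.mulR Γ₁ (G ++ [E] ++ Δ) A' B' t₁ t₂'), ?_, ?_, ?_⟩
        · rw [basic_dcast]
          refine Basic.mulR _ _ _ _ _ _ ?_ hb₁ hb₂'
          intro p q hp hq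
          exfalso
          have hc := (cond p q hp hq).2
          have hm : Fm.lDiv B A ∈ [B'] := by rw [← hc]; simp
          simp [hq] at hm
        · intro _ _ _ _ h; simp at h
        · intro _ _ _ _ h; simp at h
  | andL1 Γ' Δ' A₁ A₂ C' t₁ cond hb₁ ih₁ =>
      intro Γ Δ hΘ
      rcases split3 hΘ (fun h => Fm.noConfusion h) with ⟨G, hG1, hG2⟩ | ⟨G, hG1, hG2⟩
      · subst hG1; subst hG2
        obtain ⟨t₁', hb₁', p1, p2⟩ := ih₁ Γ (G ++ [A₁] ++ Δ') (by simp)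
        refine ⟨dcast (by simp) (DTree.andL1 (Γ ++ [E] ++ G) Δ' A₁ A₂ C'
          (dcast (by simp) t₁')), ?_, ?_, ?_⟩
        · rw [basic_dcast]
          refine Basic.andL1 _ _ _ _ _ _ ?_ ((basic_dcast _ _).2 hb₁')
          intro B₀ A₀ hx
          rw [ends_dcast]
          exact p1 G Δ' B₀ A₀ (cond B₀ A₀ hx)
        · intro _ _ _ _ h; simp at h
        · intro _ _ _ _ h; simp at h
      · subst hG1; subst hG2
        obtain ⟨t₁', hb₁', p1, p2⟩ := ih₁ (Γ' ++ [A₁] ++ G) Δ (by simp)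
        refine ⟨dcast (by simp) (DTree.andL1 Γ' (G ++ [E] ++ Δ) A₁ A₂ C'
          (dcast (by simp) t₁')), ?_, ?_, ?_⟩
        · rw [basic_dcast]
          refine Basic.andL1 _ _ _ _ _ _ ?_ ((basic_dcast _ _).2 hb₁')
          intro B₀ A₀ hx
          rw [ends_dcast]
          exact p2 Γ' G B₀ A₀ (cond B₀ A₀ hx)
        · intro _ _ _ _ h; simp at h
        · intro _ _ _ _ h; simp at h
  | andL2 Γ' Δ' A₁ A₂ C' t₁ cond hb₁ ih₁ =>
      intro Γ Δ hΘ
      rcases split3 hΘ (fun h => Fm.noConfusion h) with ⟨G, hG1, hG2⟩ | ⟨G, hG1, hG2⟩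
      · subst hG1; subst hG2
        obtain ⟨t₁', hb₁', p1, p2⟩ := ih₁ Γ (G ++ [A₂] ++ Δ') (by simp)
        refine ⟨dcast (by simp) (DTree.andL2 (Γ ++ [E] ++ G) Δ' A₁ A₂ C'
          (dcast (by simp) t₁')), ?_, ?_, ?_⟩
        · rw [basic_dcast]
          refine Basic.andL2 _ _ _ _ _ _ ?_ ((basic_dcast _ _).2 hb₁')
          intro B₀ A₀ hx
          rw [ends_dcast]
          exact p1 G Δ' B₀ A₀ (cond B₀ A₀ hx)
        · intro _ _ _ _ h; simp at h
        · intro _ _ _ _ h; simp at h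
      · subst hG1; subst hG2
        obtain ⟨t₁', hb₁', p1, p2⟩ := ih₁ (Γ' ++ [A₂] ++ G) Δ (by simp)
        refine ⟨dcast (by simp) (DTree.andL2 Γ' (G ++ [E] ++ Δ) A₁ A₂ C'
          (dcast (by simp) t₁')), ?_, ?_, ?_⟩
        · rw [basic_dcast]
          refine Basic.andL2 _ _ _ _ _ _ ?_ ((basic_dcast _ _).2 hb₁')
          intro B₀ A₀ hx
          rw [ends_dcast]
          exact p2 Γ' G B₀ A₀ (cond B₀ A₀ hx)
        · intro _ _ _ _ h; simp at h
        · intro _ _ _ _ h; simp at h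
  | andR Pi' A₁ A₂ t₁ t₂ hb₁ hb₂ ih₁ ih₂ =>
      intro Γ Δ hΘ
      subst hΘ
      obtain ⟨t₁', hb₁', _, _⟩ := ih₁ Γ Δ rfl
      obtain ⟨t₂', hb₂', _, _⟩ := ih₂ Γ Δ rfl
      refine ⟨DTree.andR _ A₁ A₂ t₁' t₂', Basic.andR _ _ _ _ _ hb₁' hb₂', ?_, ?_⟩
      · intro _ _ _ _ h; simp at h
      · intro _ _ _ _ h; simp at h
  | bangL n Γ' Δ' A' B' t₁ hb₁ ih₁ =>
      intro Γ Δ hΘ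
      rcases split3 hΘ (fun h => Fm.noConfusion h) with ⟨G, hG1, hG2⟩ | ⟨G, hG1, hG2⟩
      · subst hG1; subst hG2
        obtain ⟨t₁', hb₁', _, _⟩ := ih₁ Γ (G ++ List.replicate n A' ++ Δ') (by simp)
        refine ⟨dcast (by simp) (DTree.bangL n (Γ ++ [E] ++ G) Δ' A' B'
          (dcast (by simp) t₁')), ?_, ?_, ?_⟩
        · rw [basic_dcast]
          exact Basic.bangL _ _ _ _ _ _ ((basic_dcast _ _).2 hb₁')
        · intro _ _ _ _ h; simp at h
        · intro _ _ _ _ h; simp at h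
      · subst hG1; subst hG2
        obtain ⟨t₁', hb₁', _, _⟩ := ih₁ (Γ' ++ List.replicate n A' ++ G) Δ (by simp)
        refine ⟨dcast (by simp) (DTree.bangL n Γ' (G ++ [E] ++ Δ) A' B'
          (dcast (by simp) t₁')), ?_, ?_, ?_⟩
        · rw [basic_dcast]
          exact Basic.bangL _ _ _ _ _ _ ((basic_dcast _ _).2 hb₁')
        · intro _ _ _ _ h; simp at h
        · intro _ _ _ _ h; simp at h
  | bangR A' B' t₁ hb₁ ih₁ =>
      intro Γ Δ hΘ
      exfalso
      have hm : Fm.lDiv B A ∈ Γ ++ [Fm.lDiv B A] ++ Δ := by simp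
      rw [← hΘ] at hm
      simp at hm
  | starL Γ' Δ' A' B' tf hbf ihf =>
      intro Γ Δ hΘ
      rcases split3 hΘ (fun h => Fm.noConfusion h) with ⟨G, hG1, hG2⟩ | ⟨G, hG1, hG2⟩
      · subst hG1; subst hG2
        choose f hf _ _ using fun n => ihf n Γ (G ++ List.replicate n A' ++ Δ') (by simp)
        refine ⟨dcast (by simp) (DTree.starL (Γ ++ [E] ++ G) Δ' A' B'
          (fun n => dcast (by simp) (f n))), ?_, ?_, ?_⟩
        · rw [basic_dcast]
          exact Basic.starL _ _ _ _ _ (fun n => (basic_dcast _ _).2 (hf n))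
        · intro _ _ _ _ h; simp at h
        · intro _ _ _ _ h; simp at h
      · subst hG1; subst hG2
        choose f hf _ _ using fun n => ihf n (Γ' ++ List.replicate n A' ++ G) Δ (by simp)
        refine ⟨dcast (by simp) (DTree.starL Γ' (G ++ [E] ++ Δ) A' B'
          (fun n => dcast (by simp) (f n))), ?_, ?_, ?_⟩
        · rw [basic_dcast]
          exact Basic.starL _ _ _ _ _ (fun n => (basic_dcast _ _).2 (hf n))
        · intro _ _ _ _ h; simp at h
        · intro _ _ _ _ h; simp at h
  | starR Ps A' tf hbf ihf =>
      intro Γ Δ hΘ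
      obtain ⟨Ps₁, G₁, G₂, Ps₂, hPs, hΓ, hΔ⟩ := flatten_split hΘ
      subst hPs; subst hΓ; subst hΔ
      have hmem : (G₁ ++ [Fm.lDiv B A] ++ G₂) ∈ Ps₁ ++ (G₁ ++ [Fm.lDiv B A] ++ G₂) :: Ps₂ := by
        simp
      obtain ⟨tQ, hQ, _, _⟩ := ihf (G₁ ++ [Fm.lDiv B A] ++ G₂) hmem G₁ G₂ rfl
      have hmm : ∀ Q, Q ∈ Ps₁ ++ (G₁ ++ [E] ++ G₂) :: Ps₂ → Q ≠ G₁ ++ [E] ++ G₂ →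
          Q ∈ Ps₁ ++ (G₁ ++ [Fm.lDiv B A] ++ G₂) :: Ps₂ := by
        intro Q h hne
        rcases List.mem_append.1 h with h | h
        · exact List.mem_append_left _ h
        · rcases List.mem_cons.1 h with h | h
          · exact absurd h hne
          · exact List.mem_append_right _ (List.mem_cons_of_mem _ h)
      refine ⟨dcast (by simp) (DTree.starR (Ps₁ ++ (G₁ ++ [E] ++ G₂) :: Ps₂) A'
        (fun Q hQ' => if hq : Q = G₁ ++ [E] ++ G₂ then dcast hq.symm tQ
          else tf Q (hmm Q hQ' hq))), ?_, ?_, ?_⟩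
      · rw [basic_dcast]
        refine Basic.starR _ _ _ ?_
        intro Q hQ'
        split
        · rename_i hq
          exact (basic_dcast _ _).2 hQ
        · exact hbf _ _
      · intro _ _ _ _ h; simp at h
      · intro _ _ _ _ h; simp at h
  | nablaL Γ' Δ' A' B' t₁ hb₁ ih₁ =>
      intro Γ Δ hΘ
      rcases split3 hΘ (fun h => Fm.noConfusion h) with ⟨G, hG1, hG2⟩ | ⟨G, hG1, hG2⟩
      · subst hG1; subst hG2
        obtain ⟨t₁', hb₁', _, _⟩ := ih₁ Γ (G ++ [A'] ++ Δ') (by simp)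
        refine ⟨dcast (by simp) (DTree.nablaL (Γ ++ [E] ++ G) Δ' A' B'
          (dcast (by simp) t₁')), ?_, ?_, ?_⟩
        · rw [basic_dcast]
          exact Basic.nablaL _ _ _ _ _ ((basic_dcast _ _).2 hb₁')
        · intro _ _ _ _ h; simp at h
        · intro _ _ _ _ h; simp at h
      · subst hG1; subst hG2
        obtain ⟨t₁', hb₁', _, _⟩ := ih₁ (Γ' ++ [A'] ++ G) Δ (by simp)
        refine ⟨dcast (by simp) (DTree.nablaL Γ' (G ++ [E] ++ Δ) A' B'
          (dcast (by simp) t₁')), ?_, ?_, ?_⟩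
        · rw [basic_dcast]
          exact Basic.nablaL _ _ _ _ _ ((basic_dcast _ _).2 hb₁')
        · intro _ _ _ _ h; simp at h
        · intro _ _ _ _ h; simp at h
  | nablaR A' B' t₁ hb₁ ih₁ =>
      intro Γ Δ hΘ
      exfalso
      have hm : Fm.lDiv B A ∈ Γ ++ [Fm.lDiv B A] ++ Δ := by simp
      rw [← hΘ] at hm
      simp at hm
  | nablaP1 Γ' Pi' Δ' A' B' t₁ hb₁ ih₁ =>
      intro Γ Δ hΘ
      have hΘ' : Γ' ++ [Fm.nabla A'] ++ (Pi' ++ Δ') = Γ ++ [Fm.lDiv B A] ++ Δ := by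
        simpa [List.append_assoc] using hΘ
      rcases split3' hΘ' with ⟨G, hG1, hG2⟩ | ⟨e1, e2, e3⟩ | ⟨G, hG1, hG2⟩
      · -- occurrence inside Γ'
        subst hG1; subst hG2
        obtain ⟨t₁', hb₁', _, _⟩ := ih₁ Γ (G ++ Pi' ++ [Fm.nabla A'] ++ Δ') (by simp)
        refine ⟨dcast (by simp) (DTree.nablaP1 (Γ ++ [E] ++ G) Pi' Δ' A' B'
          (dcast (by simp) t₁')), ?_, ?_, ?_⟩
        · rw [basic_dcast]
          exact Basic.nablaP1 _ _ _ _ _ _ ((basic_dcast _ _).2 hb₁')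
        · intro _ _ _ _ h; simp at h
        · intro _ _ _ _ h; simp at h
      · exact absurd e2 (fun h => Fm.noConfusion h)
      · -- occurrence inside Pi' ++ Δ'
        rcases split2 hG1 with ⟨G₃, hA1, hA2⟩ | ⟨G₃, hA1, hA2⟩
        · -- inside Pi'
          subst hA1; subst hA2; subst hG2
          obtain ⟨t₁', hb₁', _, _⟩ := ih₁ (Γ' ++ G) (G₃ ++ [Fm.nabla A'] ++ Δ') (by simp)
          refine ⟨dcast (by simp) (DTree.nablaP1 Γ' (G ++ [E] ++ G₃) Δ' A' B'
            (dcast (by simp) t₁')), ?_, ?_, ?_⟩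
          · rw [basic_dcast]
            exact Basic.nablaP1 _ _ _ _ _ _ ((basic_dcast _ _).2 hb₁')
          · intro _ _ _ _ h; simp at h
          · intro _ _ _ _ h; simp at h
        · -- inside Δ'
          subst hA1; subst hA2; subst hG2
          obtain ⟨t₁', hb₁', _, _⟩ := ih₁ (Γ' ++ Pi' ++ [Fm.nabla A'] ++ G₃) Δ (by simp)
          refine ⟨dcast (by simp) (DTree.nablaP1 Γ' Pi' (G₃ ++ [E] ++ Δ) A' B'
            (dcast (by simp) t₁')), ?_, ?_, ?_⟩
          · rw [basic_dcast]
            exact Basic.nablaP1 _ _ _ _ _ _ ((basic_dcast _ _).2 hb₁')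
          · intro _ _ _ _ h; simp at h
          · intro _ _ _ _ h; simp at h
  | nablaP2 Γ' Pi' Δ' A' B' t₁ hb₁ ih₁ =>
      intro Γ Δ hΘ
      have hΘ' : (Γ' ++ Pi') ++ [Fm.nabla A'] ++ Δ' = Γ ++ [Fm.lDiv B A] ++ Δ := by
        simpa [List.append_assoc] using hΘ
      rcases split3' hΘ' with ⟨G, hG1, hG2⟩ | ⟨e1, e2, e3⟩ | ⟨G, hG1, hG2⟩
      · subst hG2
        rcases split2 hG1 with ⟨G₂, hA1, hA2⟩ | ⟨G₂, hA1, hA2⟩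
        · -- inside Γ'
          subst hA2; subst hA1
          obtain ⟨t₁', hb₁', _, _⟩ := ih₁ Γ (G₂ ++ [Fm.nabla A'] ++ Pi' ++ Δ') (by simp)
          refine ⟨dcast (by simp) (DTree.nablaP2 (Γ ++ [E] ++ G₂) Pi' Δ' A' B'
            (dcast (by simp) t₁')), ?_, ?_, ?_⟩
          · rw [basic_dcast]
            exact Basic.nablaP2 _ _ _ _ _ _ ((basic_dcast _ _).2 hb₁')
          · intro _ _ _ _ h; simp at h
          · intro _ _ _ _ h; simp at h
        · -- inside Pi'
          subst hA1; subst hA2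
          obtain ⟨t₁', hb₁', _, _⟩ := ih₁ (Γ' ++ [Fm.nabla A'] ++ G₂) (G ++ Δ') (by simp)
          refine ⟨dcast (by simp) (DTree.nablaP2 Γ' (G₂ ++ [E] ++ G) Δ' A' B'
            (dcast (by simp) t₁')), ?_, ?_, ?_⟩
          · rw [basic_dcast]
            exact Basic.nablaP2 _ _ _ _ _ _ ((basic_dcast _ _).2 hb₁')
          · intro _ _ _ _ h; simp at h
          · intro _ _ _ _ h; simp at h
      · exact absurd e2 (fun h => Fm.noConfusion h)
      · subst hG1; subst hG2
        obtain ⟨t₁', hb₁', _, _⟩ := ih₁ (Γ' ++ [Fm.nabla A'] ++ Pi' ++ G) Δ (by simp)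
        refine ⟨dcast (by simp) (DTree.nablaP2 Γ' Pi' (G ++ [E] ++ Δ) A' B'
          (dcast (by simp) t₁')), ?_, ?_, ?_⟩
        · rw [basic_dcast]
          exact Basic.nablaP2 _ _ _ _ _ _ ((basic_dcast _ _).2 hb₁')
        · intro _ _ _ _ h; simp at h
        · intro _ _ _ _ h; simp at h

/-- Every sequent derivable in the fragment of ACTωm without
0, 1, / and ∨ has a basic derivation. -/
theorem exists_basic_derivation (Θ : List Fm) (D : Fm)
    (h : Nonempty (DTree Θ D)) : ∃ t : DTree Θ D, Basic t := by
  obtain ⟨t⟩ := h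
  induction t with
  | ax A => exact ⟨DTree.ax A, Basic.ax A⟩
  | lDivL Γ Pi Δ A B C t₁ t₂ ih₁ ih₂ =>
      obtain ⟨s₁, hs₁⟩ := ih₁
      obtain ⟨s₂, hs₂⟩ := ih₂
      by_cases hat : ∃ p, B = Fm.atom p
      · obtain ⟨p, rfl⟩ := hat
        have hu : Basic (DTree.lDivL Γ [Fm.atom p] Δ A (Fm.atom p) C s₁
            (DTree.ax (Fm.atom p))) :=
          Basic.lDivL _ _ _ _ _ _ _ _ (fun q hq => by rw [hq]) hs₁ (Basic.ax _)
        have hcast : Γ ++ [Fm.atom p] ++ [Fm.lDiv (Fm.atom p) A] ++ Δ =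
            Γ ++ [Fm.atom p] ++ ([Fm.lDiv (Fm.atom p) A] ++ Δ) := by simp
        obtain ⟨w, hw, -⟩ := lemA hs₂ rfl Γ ([Fm.lDiv (Fm.atom p) A] ++ Δ) C
          ((basic_dcast hcast _).2 hu)
        exact ⟨dcast (by simp) w, (basic_dcast _ _).2 hw⟩
      · exact ⟨DTree.lDivL Γ Pi Δ A B C s₁ s₂,
          Basic.lDivL _ _ _ _ _ _ _ _ (fun p hp => absurd ⟨p, hp⟩ hat) hs₁ hs₂⟩
  | lDivR Pi A B t ih =>
      obtain ⟨s, hs⟩ := ih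
      exact ⟨DTree.lDivR Pi A B s, Basic.lDivR _ _ _ _ hs⟩
  | mulL Γ Δ A B C t ih =>
      obtain ⟨s, hs⟩ := ih
      exact ⟨DTree.mulL Γ Δ A B C s, Basic.mulL _ _ _ _ _ _ hs⟩
  | mulR Γ Δ A B t₁ t₂ ih₁ ih₂ =>
      obtain ⟨s₁, hs₁⟩ := ih₁
      obtain ⟨s₂, hs₂⟩ := ih₂
      by_cases hat : (∃ p, A = Fm.atom p) ∧ (∃ q, B = Fm.atom q)
      · obtain ⟨⟨p, rfl⟩, ⟨q, rfl⟩⟩ := hat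
        have hu : Basic (DTree.mulR [Fm.atom p] [Fm.atom q] (Fm.atom p) (Fm.atom q)
            (DTree.ax _) (DTree.ax _)) :=
          Basic.mulR _ _ _ _ _ _ (fun _ _ _ _ => ⟨rfl, rfl⟩) (Basic.ax _) (Basic.ax _)
        have hc1 : [Fm.atom p] ++ [Fm.atom q] = [] ++ [Fm.atom p] ++ [Fm.atom q] := by simp
        obtain ⟨v, hv, -⟩ := lemA hs₁ rfl [] [Fm.atom q]
          (Fm.mul (Fm.atom p) (Fm.atom q)) ((basic_dcast hc1 _).2 hu)
        have hc2 : [] ++ Γ ++ [Fm.atom q] = Γ ++ [Fm.atom q] ++ [] := by simp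
        obtain ⟨w, hw, -⟩ := lemA hs₂ rfl Γ []
          (Fm.mul (Fm.atom p) (Fm.atom q)) ((basic_dcast hc2 _).2 hv)
        exact ⟨dcast (by simp) w, (basic_dcast _ _).2 hw⟩
      · exact ⟨DTree.mulR Γ Δ A B s₁ s₂,
          Basic.mulR _ _ _ _ _ _ (fun p q hp hq => absurd ⟨⟨p, hp⟩, ⟨q, hq⟩⟩ hat) hs₁ hs₂⟩
  | andL1 Γ Δ A₁ A₂ C t ih =>
      obtain ⟨s, hs⟩ := ih
      by_cases hd : ∃ B0 A0, A₁ = Fm.lDiv B0 A0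
      · obtain ⟨B0, A0, rfl⟩ := hd
        obtain ⟨w, hw, -, -⟩ := lemB (Or.inl rfl) hs Γ Δ rfl
        exact ⟨w, hw⟩
      · exact ⟨DTree.andL1 Γ Δ A₁ A₂ C s,
          Basic.andL1 _ _ _ _ _ _ (fun B0 A0 h0 => absurd ⟨B0, A0, h0⟩ hd) hs⟩
  | andL2 Γ Δ A₁ A₂ C t ih =>
      obtain ⟨s, hs⟩ := ih
      by_cases hd : ∃ B0 A0, A₂ = Fm.lDiv B0 A0
      · obtain ⟨B0, A0, rfl⟩ := hd
        obtain ⟨w, hw, -, -⟩ := lemB (Or.inr rfl) hs Γ Δ rfl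
        exact ⟨w, hw⟩
      · exact ⟨DTree.andL2 Γ Δ A₁ A₂ C s,
          Basic.andL2 _ _ _ _ _ _ (fun B0 A0 h0 => absurd ⟨B0, A0, h0⟩ hd) hs⟩
  | andR Pi A₁ A₂ t₁ t₂ ih₁ ih₂ =>
      obtain ⟨s₁, hs₁⟩ := ih₁
      obtain ⟨s₂, hs₂⟩ := ih₂
      exact ⟨DTree.andR Pi A₁ A₂ s₁ s₂, Basic.andR _ _ _ _ _ hs₁ hs₂⟩
  | bangL n Γ Δ A B t ih =>
      obtain ⟨s, hs⟩ := ih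
      exact ⟨DTree.bangL n Γ Δ A B s, Basic.bangL _ _ _ _ _ _ hs⟩
  | bangR A B t ih =>
      obtain ⟨s, hs⟩ := ih
      exact ⟨DTree.bangR A B s, Basic.bangR _ _ _ hs⟩
  | starL Γ Δ A B tf ihf =>
      choose f hf using ihf
      exact ⟨DTree.starL Γ Δ A B f, Basic.starL _ _ _ _ f hf⟩
  | starR Ps A tf ihf =>
      choose f hf using ihf
      exact ⟨DTree.starR Ps A f, Basic.starR _ _ f hf⟩
  | nablaL Γ Δ A B t ih =>
      obtain ⟨s, hs⟩ := ih
      exact ⟨DTree.nablaL Γ Δ A B s, Basic.nablaL _ _ _ _ _ hs⟩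
  | nablaR A B t ih =>
      obtain ⟨s, hs⟩ := ih
      exact ⟨DTree.nablaR A B s, Basic.nablaR _ _ _ hs⟩
  | nablaP1 Γ Pi Δ A B t ih =>
      obtain ⟨s, hs⟩ := ih
      exact ⟨DTree.nablaP1 Γ Pi Δ A B s, Basic.nablaP1 _ _ _ _ _ _ hs⟩
  | nablaP2 Γ Pi Δ A B t ih =>
      obtain ⟨s, hs⟩ := ih
      exact ⟨DTree.nablaP2 Γ Pi Δ A B s, Basic.nablaP2 _ _ _ _ _ _ hs⟩
end

section
/- Bottom-top analysis, part 1. Let Γ be a sequence of primitive formulas, A a formula, and Ψ a locked sequence of formulas, and consider the sequent S = (Γ, A, Ψ ⊢ a_L·ok) in the fragment of ACTωm without 0, 1, / and ∨. Then: (a) if A = p\B with p primitive, then S is derivable iff Γ = Γ′, p for some Γ′ and Γ′, B, Ψ ⊢ a_L·ok is derivable; (b) if A = A₁·A₂, then S is derivable iff Γ, A₁, A₂, Ψ ⊢ a_L·ok is derivable; (c) if A = A₁∧A₂, then S is derivable iff Γ, Aᵢ, Ψ ⊢ a_L·ok is derivable for some i ∈ {1,2}; (d) if A = !B, then S is derivable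 iff Γ, Bⁿ, Ψ ⊢ a_L·ok is derivable for some n ∈ ℕ; (e) if A = B*, then S is derivable iff Γ, Bⁿ, Ψ ⊢ a_L·ok is derivable for every n ∈ ℕ (Bⁿ denotes n copies of B). -/
set_option linter.unusedVariables false
set_option linter.unnecessarySeqFocus false
set_option maxHeartbeats 1000000

/-- Derivability in infinitary action logic with multiplexing ACTωm. -/
inductive Deriv : List Fm → Fm → Prop where
  | ax (A : Fm) : Deriv [A] A
  | lDivL (Γ Pi Δ : List Fm) (A B C : Fm) :
      Deriv (Γ ++ [A] ++ Δ) C → Deriv Pi B → Deriv (Γ ++ Pi ++ [Fm.lDiv B A] ++ Δ) C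
  | lDivR (Pi : List Fm) (A B : Fm) :
      Deriv (B :: Pi) A → Deriv Pi (Fm.lDiv B A)
  | rDivL (Γ Pi Δ : List Fm) (A B C : Fm) :
      Deriv (Γ ++ [A] ++ Δ) C → Deriv Pi B → Deriv (Γ ++ [Fm.rDiv A B] ++ Pi ++ Δ) C
  | rDivR (Pi : List Fm) (A B : Fm) :
      Deriv (Pi ++ [B]) A → Deriv Pi (Fm.rDiv A B)
  | mulL (Γ Δ : List Fm) (A B C : Fm) :
      Deriv (Γ ++ [A, B] ++ Δ) C → Deriv (Γ ++ [Fm.mul A B] ++ Δ) C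
  | mulR (Γ Δ : List Fm) (A B : Fm) :
      Deriv Γ A → Deriv Δ B → Deriv (Γ ++ Δ) (Fm.mul A B)
  | andL1 (Γ Δ : List Fm) (A₁ A₂ C : Fm) :
      Deriv (Γ ++ [A₁] ++ Δ) C → Deriv (Γ ++ [Fm.and A₁ A₂] ++ Δ) C
  | andL2 (Γ Δ : List Fm) (A₁ A₂ C : Fm) :
      Deriv (Γ ++ [A₂] ++ Δ) C → Deriv (Γ ++ [Fm.and A₁ A₂] ++ Δ) C
  | andR (Pi : List Fm) (A₁ A₂ : Fm) :
      Deriv Pi A₁ → Deriv Pi A₂ → Deriv Pi (Fm.and A₁ A₂)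
  | orL (Γ Δ : List Fm) (A₁ A₂ C : Fm) :
      Deriv (Γ ++ [A₁] ++ Δ) C → Deriv (Γ ++ [A₂] ++ Δ) C →
      Deriv (Γ ++ [Fm.or A₁ A₂] ++ Δ) C
  | orR1 (Pi : List Fm) (A₁ A₂ : Fm) : Deriv Pi A₁ → Deriv Pi (Fm.or A₁ A₂)
  | orR2 (Pi : List Fm) (A₁ A₂ : Fm) : Deriv Pi A₂ → Deriv Pi (Fm.or A₁ A₂)
  | zeroL (Γ Δ : List Fm) (C : Fm) : Deriv (Γ ++ [Fm.zero] ++ Δ) C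
  | oneL (Γ Δ : List Fm) (C : Fm) : Deriv (Γ ++ Δ) C → Deriv (Γ ++ [Fm.one] ++ Δ) C
  | oneR : Deriv [] Fm.one
  | bangL (n : ℕ) (Γ Δ : List Fm) (A B : Fm) :
      Deriv (Γ ++ List.replicate n A ++ Δ) B → Deriv (Γ ++ [Fm.bang A] ++ Δ) B
  | bangR (A B : Fm) : Deriv [A] B → Deriv [Fm.bang A] (Fm.bang B)
  | starL (Γ Δ : List Fm) (A B : Fm) :
      (∀ n : ℕ, Deriv (Γ ++ List.replicate n A ++ Δ) B) → Deriv (Γ ++ [Fm.star A] ++ Δ) B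
  | starR (Ps : List (List Fm)) (A : Fm) :
      (∀ Pi ∈ Ps, Deriv Pi A) → Deriv Ps.flatten (Fm.star A)
  | nablaL (Γ Δ : List Fm) (A B : Fm) :
      Deriv (Γ ++ [A] ++ Δ) B → Deriv (Γ ++ [Fm.nabla A] ++ Δ) B
  | nablaR (A B : Fm) : Deriv [A] B → Deriv [Fm.nabla A] (Fm.nabla B)
  | nablaP1 (Γ Pi Δ : List Fm) (A B : Fm) :
      Deriv (Γ ++ Pi ++ [Fm.nabla A] ++ Δ) B → Deriv (Γ ++ [Fm.nabla A] ++ Pi ++ Δ) B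
  | nablaP2 (Γ Pi Δ : List Fm) (A B : Fm) :
      Deriv (Γ ++ [Fm.nabla A] ++ Pi ++ Δ) B → Deriv (Γ ++ Pi ++ [Fm.nabla A] ++ Δ) B

/-- Fixed pairwise distinct primitive formulas used throughout the construction. -/
def aL : Fm := Fm.atom 0
def aR : Fm := Fm.atom 1
def a1F : Fm := Fm.atom 2
def a2F : Fm := Fm.atom 3
def aSig : Fm := Fm.atom 4
def aPiF : Fm := Fm.atom 5
def okF : Fm := Fm.atom 6
def goF : Fm := Fm.atom 7
def waitF : Fm := Fm.atom 8
def failF : Fm := Fm.atom 9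
def finF : Fm := Fm.atom 10
def energyF : Fm := Fm.atom 11

/-- `F` is a primitive formula. -/
def Fm.IsPrim (F : Fm) : Prop := ∃ p : ℕ, F = Fm.atom p

/-- A formula is locked if it is of the form `p\A` or `(p\B)∧(q\C)` with `p, q` primitive. -/
def Locked (F : Fm) : Prop :=
  (∃ (p : ℕ) (A : Fm), F = Fm.lDiv (Fm.atom p) A) ∨
  (∃ (p q : ℕ) (B C : Fm), F = Fm.and (Fm.lDiv (Fm.atom p) B) (Fm.lDiv (Fm.atom q) C))

/-- A sequence of formulas is locked if each of its members is locked. -/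
def LockedSeq (Ψ : List Fm) : Prop := ∀ F ∈ Ψ, Locked F

/-- A sequence consisting of primitive formulas. -/
def PrimSeq (Γ : List Fm) : Prop := ∀ F ∈ Γ, F.IsPrim

/-- The formula `OK := ok\ok`. -/
def OKF : Fm := Fm.lDiv okF okF

/-- `[B]? A := B\(B·A)`. -/
def qm (B A : Fm) : Fm := Fm.lDiv B (Fm.mul B A)

/-- `[B]→ A := B\(A·B)`. -/
def ra (B A : Fm) : Fm := Fm.lDiv B (Fm.mul A B)

-- list splitting helpers
lemma three_way {α : Type*} {Γ Γ₀ Ψ Δ : List α} {A M : α}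
    (h : Γ ++ [A] ++ Ψ = Γ₀ ++ [M] ++ Δ) :
    (Γ = Γ₀ ∧ A = M ∧ Ψ = Δ) ∨
    (∃ Ψ₁, Γ₀ = Γ ++ [A] ++ Ψ₁ ∧ Ψ = Ψ₁ ++ [M] ++ Δ) ∨
    (∃ Γ₁, Γ = Γ₀ ++ [M] ++ Γ₁ ∧ Δ = Γ₁ ++ [A] ++ Ψ) := by
  induction Γ generalizing Γ₀ with
  | nil =>
    cases Γ₀ with
    | nil =>
      simp only [List.nil_append, List.cons_append] at h
      obtain ⟨rfl, rfl⟩ := List.cons_eq_cons.mp h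
      exact Or.inl ⟨rfl, rfl, rfl⟩
    | cons b Γ₀' =>
      simp only [List.nil_append, List.cons_append] at h
      obtain ⟨rfl, h2⟩ := List.cons_eq_cons.mp h
      exact Or.inr (Or.inl ⟨Γ₀', by simp, by simpa using h2⟩)
  | cons a Γ' ih =>
    cases Γ₀ with
    | nil =>
      simp only [List.nil_append, List.cons_append] at h
      obtain ⟨rfl, h2⟩ := List.cons_eq_cons.mp h
      exact Or.inr (Or.inr ⟨Γ', by simp, by simpa using h2.symm⟩)
    | cons b Γ₀' =>
      simp only [List.cons_append] at h
      obtain ⟨rfl, h2⟩ := List.cons_eq_cons.mp h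
      rcases ih h2 with ⟨rfl, rfl, rfl⟩ | ⟨Ψ₁, h3, h4⟩ | ⟨Γ₁, h3, h4⟩
      · exact Or.inl ⟨rfl, rfl, rfl⟩
      · exact Or.inr (Or.inl ⟨Ψ₁, by simp [h3], h4⟩)
      · exact Or.inr (Or.inr ⟨Γ₁, by simp [h3], h4⟩)

lemma split_mid {α : Type*} {Γ₀ Pi Γ Ψ₁ : List α} {A : α}
    (h : Γ₀ ++ Pi = Γ ++ [A] ++ Ψ₁) :
    (∃ Γ₂, Γ = Γ₀ ++ Γ₂ ∧ Pi = Γ₂ ++ [A] ++ Ψ₁) ∨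
    (∃ Ψ', Γ₀ = Γ ++ [A] ++ Ψ' ∧ Ψ₁ = Ψ' ++ Pi) := by
  rw [List.append_assoc Γ] at h
  rcases List.append_eq_append_iff.mp h with ⟨a', h1, h2⟩ | ⟨c', h1, h2⟩
  · exact Or.inl ⟨a', h1, by simpa using h2⟩
  · cases c' with
    | nil => exact Or.inl ⟨[], by simp [h1], by simpa using h2.symm⟩
    | cons x c'' =>
      obtain ⟨rfl, h3⟩ := List.cons_eq_cons.mp h2
      exact Or.inr ⟨c'', by simpa using h1, h3⟩
lemma primseq_left {a b : List Fm} (h : PrimSeq (a ++ b)) : PrimSeq a :=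
  fun F hF => h F (by simp [hF])
lemma primseq_right {a b : List Fm} (h : PrimSeq (a ++ b)) : PrimSeq b :=
  fun F hF => h F (by simp [hF])
lemma lockedseq_left {a b : List Fm} (h : LockedSeq (a ++ b)) : LockedSeq a :=
  fun F hF => h F (by simp [hF])
lemma lockedseq_right {a b : List Fm} (h : LockedSeq (a ++ b)) : LockedSeq b :=
  fun F hF => h F (by simp [hF])
lemma lockedseq_append {a b : List Fm} (h1 : LockedSeq a) (h2 : LockedSeq b) :
    LockedSeq (a ++ b) := fun F hF => by
  rcases List.mem_append.mp hF with h | h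
  · exact h1 F h
  · exact h2 F h

/-- A primitive sequence deriving an atom must be that very atom. -/
lemma prim_atom : ∀ {Pii : List Fm} {C : Fm}, Deriv Pii C →
    ∀ q : ℕ, C = Fm.atom q → PrimSeq Pii → Pii = [Fm.atom q] := by
  intro Pii C d
  induction d with
  | ax A => intro q hq hp; rw [hq]
  | lDivL Γ Pi Δ A B C d1 d2 ih1 ih2 =>
    intro q hq hp
    obtain ⟨n, hn⟩ := hp (Fm.lDiv B A) (by simp); cases hn
  | lDivR Pi A B d ih => intro q hq; cases hq
  | rDivL Γ Pi Δ A B C d1 d2 ih1 ih2 =>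
    intro q hq hp
    obtain ⟨n, hn⟩ := hp (Fm.rDiv A B) (by simp); cases hn
  | rDivR Pi A B d ih => intro q hq; cases hq
  | mulL Γ Δ A B C d ih =>
    intro q hq hp
    obtain ⟨n, hn⟩ := hp (Fm.mul A B) (by simp); cases hn
  | mulR Γ Δ A B d1 d2 ih1 ih2 => intro q hq; cases hq
  | andL1 Γ Δ A₁ A₂ C d ih =>
    intro q hq hp
    obtain ⟨n, hn⟩ := hp (Fm.and A₁ A₂) (by simp); cases hn
  | andL2 Γ Δ A₁ A₂ C d ih =>
    intro q hq hp
    obtain ⟨n, hn⟩ := hp (Fm.and A₁ A₂) (by simp); cases hn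
  | andR Pi A₁ A₂ d1 d2 ih1 ih2 => intro q hq; cases hq
  | orL Γ Δ A₁ A₂ C d1 d2 ih1 ih2 =>
    intro q hq hp
    obtain ⟨n, hn⟩ := hp (Fm.or A₁ A₂) (by simp); cases hn
  | orR1 Pi A₁ A₂ d ih => intro q hq; cases hq
  | orR2 Pi A₁ A₂ d ih => intro q hq; cases hq
  | zeroL Γ Δ C =>
    intro q hq hp
    obtain ⟨n, hn⟩ := hp Fm.zero (by simp); cases hn
  | oneL Γ Δ C d ih =>
    intro q hq hp
    obtain ⟨n, hn⟩ := hp Fm.one (by simp); cases hn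
  | oneR => intro q hq; cases hq
  | bangL n Γ Δ A B d ih =>
    intro q hq hp
    obtain ⟨m, hn⟩ := hp (Fm.bang A) (by simp); cases hn
  | bangR A B d ih => intro q hq; cases hq
  | starL Γ Δ A B d ih =>
    intro q hq hp
    obtain ⟨m, hn⟩ := hp (Fm.star A) (by simp); cases hn
  | starR Ps A d ih => intro q hq; cases hq
  | nablaL Γ Δ A B d ih =>
    intro q hq hp
    obtain ⟨m, hn⟩ := hp (Fm.nabla A) (by simp); cases hn
  | nablaR A B d ih => intro q hq; cases hq
  | nablaP1 Γ Pi Δ A B d ih =>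
    intro q hq hp
    obtain ⟨m, hn⟩ := hp (Fm.nabla A) (by simp); cases hn
  | nablaP2 Γ Pi Δ A B d ih =>
    intro q hq hp
    obtain ⟨m, hn⟩ := hp (Fm.nabla A) (by simp); cases hn

/-- A locked sequence never derives an atom. -/
lemma locked_no_atom : ∀ {Pii : List Fm} {C : Fm}, Deriv Pii C →
    ∀ q : ℕ, C = Fm.atom q → LockedSeq Pii → False := by
  intro Pii C d
  induction d with
  | ax A =>
    intro q hq hp; subst hq
    rcases hp (Fm.atom q) (by simp) with ⟨p, A', hE⟩ | ⟨p, r, B', C', hE⟩ <;> cases hE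
  | lDivL Γ Pi Δ A B C d1 d2 ih1 ih2 =>
    intro q hq hp
    rcases hp (Fm.lDiv B A) (by simp) with ⟨p, A', hE⟩ | ⟨p, r, B', C', hE⟩
    · injection hE with h1 h2; subst h1
      exact ih2 p rfl (fun F hF => hp F (by simp [hF]))
    · cases hE
  | lDivR Pi A B d ih => intro q hq; cases hq
  | rDivL Γ Pi Δ A B C d1 d2 ih1 ih2 =>
    intro q hq hp
    rcases hp (Fm.rDiv A B) (by simp) with ⟨p, A', hE⟩ | ⟨p, r, B', C', hE⟩ <;> cases hE
  | rDivR Pi A B d ih => intro q hq; cases hq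
  | mulL Γ Δ A B C d ih =>
    intro q hq hp
    rcases hp (Fm.mul A B) (by simp) with ⟨p, A', hE⟩ | ⟨p, r, B', C', hE⟩ <;> cases hE
  | mulR Γ Δ A B d1 d2 ih1 ih2 => intro q hq; cases hq
  | andL1 Γ Δ A₁ A₂ C d ih =>
    intro q hq hp
    rcases hp (Fm.and A₁ A₂) (by simp) with ⟨p, A', hE⟩ | ⟨p, r, B', C', hE⟩
    · cases hE
    · injection hE with h1 h2; subst h1; subst h2
      refine ih q hq (lockedseq_append (lockedseq_append (lockedseq_left (lockedseq_left hp)) ?_) (lockedseq_right hp))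
      intro F hF
      rcases List.mem_singleton.mp hF with rfl
      exact Or.inl ⟨p, B', rfl⟩
  | andL2 Γ Δ A₁ A₂ C d ih =>
    intro q hq hp
    rcases hp (Fm.and A₁ A₂) (by simp) with ⟨p, A', hE⟩ | ⟨p, r, B', C', hE⟩
    · cases hE
    · injection hE with h1 h2; subst h1; subst h2
      refine ih q hq (lockedseq_append (lockedseq_append (lockedseq_left (lockedseq_left hp)) ?_) (lockedseq_right hp))
      intro F hF
      rcases List.mem_singleton.mp hF with rfl
      exact Or.inl ⟨r, C', rfl⟩
  | andR Pi A₁ A₂ d1 d2 ih1 ih2 => intro q hq; cases hq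
  | orL Γ Δ A₁ A₂ C d1 d2 ih1 ih2 =>
    intro q hq hp
    rcases hp (Fm.or A₁ A₂) (by simp) with ⟨p, A', hE⟩ | ⟨p, r, B', C', hE⟩ <;> cases hE
  | orR1 Pi A₁ A₂ d ih => intro q hq; cases hq
  | orR2 Pi A₁ A₂ d ih => intro q hq; cases hq
  | zeroL Γ Δ C =>
    intro q hq hp
    rcases hp Fm.zero (by simp) with ⟨p, A', hE⟩ | ⟨p, r, B', C', hE⟩ <;> cases hE
  | oneL Γ Δ C d ih =>
    intro q hq hp
    rcases hp Fm.one (by simp) with ⟨p, A', hE⟩ | ⟨p, r, B', C', hE⟩ <;> cases hE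
  | oneR => intro q hq; cases hq
  | bangL n Γ Δ A B d ih =>
    intro q hq hp
    rcases hp (Fm.bang A) (by simp) with ⟨p, A', hE⟩ | ⟨p, r, B', C', hE⟩ <;> cases hE
  | bangR A B d ih => intro q hq; cases hq
  | starL Γ Δ A B d ih =>
    intro q hq hp
    rcases hp (Fm.star A) (by simp) with ⟨p, A', hE⟩ | ⟨p, r, B', C', hE⟩ <;> cases hE
  | starR Ps A d ih => intro q hq; cases hq
  | nablaL Γ Δ A B d ih =>
    intro q hq hp
    rcases hp (Fm.nabla A) (by simp) with ⟨p, A', hE⟩ | ⟨p, r, B', C', hE⟩ <;> cases hE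
  | nablaR A B d ih => intro q hq; cases hq
  | nablaP1 Γ Pi Δ A B d ih =>
    intro q hq hp
    rcases hp (Fm.nabla A) (by simp) with ⟨p, A', hE⟩ | ⟨p, r, B', C', hE⟩ <;> cases hE
  | nablaP2 Γ Pi Δ A B d ih =>
    intro q hq hp
    rcases hp (Fm.nabla A) (by simp) with ⟨p, A', hE⟩ | ⟨p, r, B', C', hE⟩ <;> cases hE
def Good (C : Fm) : Prop := (∃ n, C = Fm.atom n) ∨ C = Fm.mul aL okF

def InvP (Γ : List Fm) (A : Fm) (Ψ : List Fm) (C : Fm) : Prop :=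
  (∀ p B, A = Fm.lDiv (Fm.atom p) B →
      ∃ Γ', Γ = Γ' ++ [Fm.atom p] ∧ Deriv (Γ' ++ [B] ++ Ψ) C) ∧
  (∀ A₁ A₂, A = Fm.mul A₁ A₂ → Deriv (Γ ++ [A₁, A₂] ++ Ψ) C) ∧
  (∀ A₁ A₂, A = Fm.and A₁ A₂ →
      Deriv (Γ ++ [A₁] ++ Ψ) C ∨ Deriv (Γ ++ [A₂] ++ Ψ) C) ∧
  (∀ B, A = Fm.bang B → ∃ n, Deriv (Γ ++ List.replicate n B ++ Ψ) C) ∧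
  (∀ B, A = Fm.star B → ∀ n, Deriv (Γ ++ List.replicate n B ++ Ψ) C)

lemma inv_transport {Γ A Ψ C Γo Ψo Co P}
    (hP : Γo = P ++ Γ) (h : InvP Γ A Ψ C)
    (step : ∀ Θ : List Fm, Deriv (Θ ++ Ψ) C → Deriv (P ++ Θ ++ Ψo) Co) :
    InvP Γo A Ψo Co := by
  subst hP
  obtain ⟨h1, h2, h3, h4, h5⟩ := h
  refine ⟨?_, ?_, ?_, ?_, ?_⟩
  · intro p B hE
    obtain ⟨Γ', rfl, d⟩ := h1 p B hE
    refine ⟨P ++ Γ', by simp, ?_⟩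
    have := step (Γ' ++ [B]) (by simpa [List.append_assoc] using d)
    simpa [List.append_assoc] using this
  · intro A₁ A₂ hE
    have := step (Γ ++ [A₁, A₂]) (by simpa [List.append_assoc] using h2 A₁ A₂ hE)
    simpa [List.append_assoc] using this
  · intro A₁ A₂ hE
    rcases h3 A₁ A₂ hE with d | d
    · have := step (Γ ++ [A₁]) (by simpa [List.append_assoc] using d)
      exact Or.inl (by simpa [List.append_assoc] using this)
    · have := step (Γ ++ [A₂]) (by simpa [List.append_assoc] using d)
      exact Or.inr (by simpa [List.append_assoc] using this)
  · intro B hE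
    obtain ⟨n, d⟩ := h4 B hE
    have := step (Γ ++ List.replicate n B) (by simpa [List.append_assoc] using d)
    exact ⟨n, by simpa [List.append_assoc] using this⟩
  · intro B hE n
    have := step (Γ ++ List.replicate n B)
      (by simpa [List.append_assoc] using h5 B hE n)
    simpa [List.append_assoc] using this
lemma invp_vac {Γ Ψ : List Fm} {C A : Fm}
    (h1 : ∀ p B, A ≠ Fm.lDiv (Fm.atom p) B)
    (h2 : ∀ A₁ A₂, A ≠ Fm.mul A₁ A₂)
    (h3 : ∀ A₁ A₂, A ≠ Fm.and A₁ A₂)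
    (h4 : ∀ B, A ≠ Fm.bang B)
    (h5 : ∀ B, A ≠ Fm.star B) : InvP Γ A Ψ C :=
  ⟨fun p B hE => absurd hE (h1 p B), fun X Y hE => absurd hE (h2 X Y),
   fun X Y hE => absurd hE (h3 X Y), fun B hE => absurd hE (h4 B),
   fun B hE => absurd hE (h5 B)⟩

lemma invp_ldiv_gen {Γ Ψ : List Fm} {C Bl X : Fm}
    (h : ∀ p, Bl = Fm.atom p →
      ∃ Γ', Γ = Γ' ++ [Fm.atom p] ∧ Deriv (Γ' ++ [X] ++ Ψ) C) :
    InvP Γ (Fm.lDiv Bl X) Ψ C := by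
  refine ⟨fun p B hE => ?_, fun X' Y' hE => absurd hE (by simp),
    fun X' Y' hE => absurd hE (by simp), fun B hE => absurd hE (by simp),
    fun B hE => absurd hE (by simp)⟩
  injection hE with hE1 hE2
  subst hE2
  exact h p hE1

lemma invp_mul {Γ Ψ : List Fm} {C A₁ A₂ : Fm}
    (h : Deriv (Γ ++ [A₁, A₂] ++ Ψ) C) : InvP Γ (Fm.mul A₁ A₂) Ψ C := by
  refine ⟨fun p B hE => absurd hE (by simp), fun X Y hE => ?_,
    fun X Y hE => absurd hE (by simp), fun B hE => absurd hE (by simp),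
    fun B hE => absurd hE (by simp)⟩
  injection hE with hE1 hE2
  subst hE1; subst hE2
  exact h

lemma invp_and {Γ Ψ : List Fm} {C A₁ A₂ : Fm}
    (h : Deriv (Γ ++ [A₁] ++ Ψ) C ∨ Deriv (Γ ++ [A₂] ++ Ψ) C) :
    InvP Γ (Fm.and A₁ A₂) Ψ C := by
  refine ⟨fun p B hE => absurd hE (by simp), fun X Y hE => absurd hE (by simp),
    fun X Y hE => ?_, fun B hE => absurd hE (by simp),
    fun B hE => absurd hE (by simp)⟩
  injection hE with hE1 hE2
  subst hE1; subst hE2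
  exact h

lemma invp_bang {Γ Ψ : List Fm} {C B : Fm}
    (h : ∃ n, Deriv (Γ ++ List.replicate n B ++ Ψ) C) :
    InvP Γ (Fm.bang B) Ψ C := by
  refine ⟨fun p B' hE => absurd hE (by simp), fun X Y hE => absurd hE (by simp),
    fun X Y hE => absurd hE (by simp), fun B' hE => ?_,
    fun B' hE => absurd hE (by simp)⟩
  injection hE with hE1
  subst hE1
  exact h

lemma invp_star {Γ Ψ : List Fm} {C B : Fm}
    (h : ∀ n, Deriv (Γ ++ List.replicate n B ++ Ψ) C) :
    InvP Γ (Fm.star B) Ψ C := by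
  refine ⟨fun p B' hE => absurd hE (by simp), fun X Y hE => absurd hE (by simp),
    fun X Y hE => absurd hE (by simp), fun B' hE => absurd hE (by simp),
    fun B' hE => ?_⟩
  injection hE with hE1
  subst hE1
  exact h
lemma main_inv : ∀ {Pii : List Fm} {C : Fm}, Deriv Pii C →
    Good C → ∀ (Γ : List Fm) (A : Fm) (Ψ : List Fm), Pii = Γ ++ [A] ++ Ψ →
    PrimSeq Γ → LockedSeq Ψ → InvP Γ A Ψ C := by
  intro Pii C d
  induction d with
  | ax A0 =>
    intro hC Γ A Ψ h hΓ hΨ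
    have h' : Γ ++ [A] ++ Ψ = [] ++ [A0] ++ [] := by simpa using h.symm
    rcases three_way h' with ⟨rfl, rfl, rfl⟩ | ⟨Ψ₁, hG, hH⟩ | ⟨Γ₁, hG, hH⟩
    · rcases hC with ⟨n, rfl⟩ | rfl
      · exact invp_vac (by simp) (by simp) (by simp) (by simp) (by simp)
      · refine invp_mul ?_
        have := Deriv.mulR [aL] [okF] aL okF (Deriv.ax aL) (Deriv.ax okF)
        simpa using this
    · simp at hG
    · simp at hH
  | lDivL Γ₀ Pi Δ X Bl C0 d1 d2 ih1 ih2 =>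
    intro hC Γ A Ψ h hΓ hΨ
    have h' : Γ ++ [A] ++ Ψ = (Γ₀ ++ Pi) ++ [Fm.lDiv Bl X] ++ Δ := h.symm
    rcases three_way h' with ⟨rfl, rfl, rfl⟩ | ⟨Ψ₁, hG, rfl⟩ | ⟨Γ₁, rfl, rfl⟩
    · refine invp_ldiv_gen ?_
      intro p hBl
      subst hBl
      have hPi := prim_atom d2 p rfl (primseq_right hΓ)
      subst hPi
      exact ⟨Γ₀, rfl, d1⟩
    · have hL : Locked (Fm.lDiv Bl X) := hΨ _ (by simp)
      rcases hL with ⟨p, Y, hE⟩ | ⟨p, q, B1, C1, hE⟩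
      · injection hE with hE1 hE2
        subst hE1; subst hE2
        rcases split_mid hG with ⟨Γ₂, rfl, rfl⟩ | ⟨Ψ', hG0, rfl⟩
        · have hI := ih2 (Or.inl ⟨p, rfl⟩) Γ₂ A Ψ₁ rfl (primseq_right hΓ)
            (lockedseq_left (lockedseq_left hΨ))
          refine inv_transport rfl hI ?_
          intro Θ u
          have := Deriv.lDivL Γ₀ (Θ ++ Ψ₁) Δ X (Fm.atom p) C0 d1 u
          simpa [List.append_assoc] using this
        · exact (locked_no_atom d2 p rfl
            (lockedseq_right (lockedseq_left (lockedseq_left hΨ)))).elim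
      · cases hE
    · obtain ⟨n, hn⟩ := hΓ (Fm.lDiv Bl X) (by simp)
      cases hn
  | lDivR Pi X Y d ih =>
    intro hC Γ A Ψ h hΓ hΨ
    rcases hC with ⟨n, hn⟩ | hn <;> cases hn
  | rDivL Γ₀ Pi Δ X Y C0 d1 d2 ih1 ih2 =>
    intro hC Γ A Ψ h hΓ hΨ
    have h' : Γ ++ [A] ++ Ψ = Γ₀ ++ [Fm.rDiv X Y] ++ (Pi ++ Δ) := by
      rw [← h]; simp [List.append_assoc]
    rcases three_way h' with ⟨rfl, rfl, rfl⟩ | ⟨Ψ₁, hG, rfl⟩ | ⟨Γ₁, rfl, hH⟩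
    · exact invp_vac (by simp) (by simp) (by simp) (by simp) (by simp)
    · rcases hΨ (Fm.rDiv X Y) (by simp) with ⟨p, Y', hE⟩ | ⟨p, q, B1, C1, hE⟩ <;> cases hE
    · obtain ⟨n, hn⟩ := hΓ (Fm.rDiv X Y) (by simp)
      cases hn
  | rDivR Pi X Y d ih =>
    intro hC Γ A Ψ h hΓ hΨ
    rcases hC with ⟨n, hn⟩ | hn <;> cases hn
  | mulL Γ₀ Δ X Y C0 d ih =>
    intro hC Γ A Ψ h hΓ hΨ
    rcases three_way h.symm with ⟨rfl, rfl, rfl⟩ | ⟨Ψ₁, hG, rfl⟩ | ⟨Γ₁, rfl, rfl⟩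
    · exact invp_mul d
    · rcases hΨ (Fm.mul X Y) (by simp) with ⟨p, Y', hE⟩ | ⟨p, q, B1, C1, hE⟩ <;> cases hE
    · obtain ⟨n, hn⟩ := hΓ (Fm.mul X Y) (by simp)
      cases hn
  | mulR P1 P2 X Y d1 d2 ih1 ih2 =>
    intro hC Γ A Ψ h hΓ hΨ
    rcases hC with ⟨n, hn⟩ | hn
    · cases hn
    injection hn with hn1 hn2
    subst hn1; subst hn2
    rcases split_mid h with ⟨Γ₂, rfl, rfl⟩ | ⟨Ψ', rfl, rfl⟩
    · have hI := ih2 (Or.inl ⟨6, rfl⟩) Γ₂ A Ψ rfl (primseq_right hΓ) hΨ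
      refine inv_transport rfl hI ?_
      intro Θ u
      have := Deriv.mulR P1 (Θ ++ Ψ) aL okF d1 u
      simpa [List.append_assoc] using this
    · have hI := ih1 (Or.inl ⟨0, rfl⟩) Γ A Ψ' rfl hΓ (lockedseq_left hΨ)
      refine inv_transport (P := []) (by simp) hI ?_
      intro Θ u
      have := Deriv.mulR (Θ ++ Ψ') P2 aL okF u d2
      simpa [List.append_assoc] using this
  | andL1 Γ₀ Δ A₁ A₂ C0 d ih =>
    intro hC Γ A Ψ h hΓ hΨ
    rcases three_way h.symm with ⟨rfl, rfl, rfl⟩ | ⟨Ψ₁, rfl, rfl⟩ | ⟨Γ₁, rfl, rfl⟩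
    · exact invp_and (Or.inl d)
    · rcases hΨ (Fm.and A₁ A₂) (by simp) with ⟨p, Y', hE⟩ | ⟨p, q, B1, C1, hE⟩
      · cases hE
      injection hE with hE1 hE2
      subst hE1; subst hE2
      have hΨ' : LockedSeq (Ψ₁ ++ [Fm.lDiv (Fm.atom p) B1] ++ Δ) := by
        refine lockedseq_append (lockedseq_append (lockedseq_left (lockedseq_left hΨ)) ?_)
          (lockedseq_right hΨ)
        intro F hF
        rcases List.mem_singleton.mp hF with rfl
        exact Or.inl ⟨p, B1, rfl⟩
      have hI := ih hC Γ A (Ψ₁ ++ [Fm.lDiv (Fm.atom p) B1] ++ Δ)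
        (by simp [List.append_assoc]) hΓ hΨ'
      refine inv_transport (P := []) (by simp) hI ?_
      intro Θ u
      have := Deriv.andL1 (Θ ++ Ψ₁) Δ (Fm.lDiv (Fm.atom p) B1) (Fm.lDiv (Fm.atom q) C1) C0
        (by simpa [List.append_assoc] using u)
      simpa [List.append_assoc] using this
    · obtain ⟨n, hn⟩ := hΓ (Fm.and A₁ A₂) (by simp)
      cases hn
  | andL2 Γ₀ Δ A₁ A₂ C0 d ih =>
    intro hC Γ A Ψ h hΓ hΨ
    rcases three_way h.symm with ⟨rfl, rfl, rfl⟩ | ⟨Ψ₁, rfl, rfl⟩ | ⟨Γ₁, rfl, rfl⟩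
    · exact invp_and (Or.inr d)
    · rcases hΨ (Fm.and A₁ A₂) (by simp) with ⟨p, Y', hE⟩ | ⟨p, q, B1, C1, hE⟩
      · cases hE
      injection hE with hE1 hE2
      subst hE1; subst hE2
      have hΨ' : LockedSeq (Ψ₁ ++ [Fm.lDiv (Fm.atom q) C1] ++ Δ) := by
        refine lockedseq_append (lockedseq_append (lockedseq_left (lockedseq_left hΨ)) ?_)
          (lockedseq_right hΨ)
        intro F hF
        rcases List.mem_singleton.mp hF with rfl
        exact Or.inl ⟨q, C1, rfl⟩
      have hI := ih hC Γ A (Ψ₁ ++ [Fm.lDiv (Fm.atom q) C1] ++ Δ)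
        (by simp [List.append_assoc]) hΓ hΨ'
      refine inv_transport (P := []) (by simp) hI ?_
      intro Θ u
      have := Deriv.andL2 (Θ ++ Ψ₁) Δ (Fm.lDiv (Fm.atom p) B1) (Fm.lDiv (Fm.atom q) C1) C0
        (by simpa [List.append_assoc] using u)
      simpa [List.append_assoc] using this
    · obtain ⟨n, hn⟩ := hΓ (Fm.and A₁ A₂) (by simp)
      cases hn
  | andR Pi A₁ A₂ d1 d2 ih1 ih2 =>
    intro hC Γ A Ψ h hΓ hΨ
    rcases hC with ⟨n, hn⟩ | hn <;> cases hn
  | orL Γ₀ Δ A₁ A₂ C0 d1 d2 ih1 ih2 =>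
    intro hC Γ A Ψ h hΓ hΨ
    rcases three_way h.symm with ⟨rfl, rfl, rfl⟩ | ⟨Ψ₁, rfl, rfl⟩ | ⟨Γ₁, rfl, rfl⟩
    · exact invp_vac (by simp) (by simp) (by simp) (by simp) (by simp)
    · rcases hΨ (Fm.or A₁ A₂) (by simp) with ⟨p, Y', hE⟩ | ⟨p, q, B1, C1, hE⟩ <;> cases hE
    · obtain ⟨n, hn⟩ := hΓ (Fm.or A₁ A₂) (by simp)
      cases hn
  | orR1 Pi A₁ A₂ d ih =>
    intro hC Γ A Ψ h hΓ hΨ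
    rcases hC with ⟨n, hn⟩ | hn <;> cases hn
  | orR2 Pi A₁ A₂ d ih =>
    intro hC Γ A Ψ h hΓ hΨ
    rcases hC with ⟨n, hn⟩ | hn <;> cases hn
  | zeroL Γ₀ Δ C0 =>
    intro hC Γ A Ψ h hΓ hΨ
    rcases three_way h.symm with ⟨rfl, rfl, rfl⟩ | ⟨Ψ₁, rfl, rfl⟩ | ⟨Γ₁, rfl, rfl⟩
    · exact invp_vac (by simp) (by simp) (by simp) (by simp) (by simp)
    · rcases hΨ Fm.zero (by simp) with ⟨p, Y', hE⟩ | ⟨p, q, B1, C1, hE⟩ <;> cases hE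
    · obtain ⟨n, hn⟩ := hΓ Fm.zero (by simp)
      cases hn
  | oneL Γ₀ Δ C0 d ih =>
    intro hC Γ A Ψ h hΓ hΨ
    rcases three_way h.symm with ⟨rfl, rfl, rfl⟩ | ⟨Ψ₁, rfl, rfl⟩ | ⟨Γ₁, rfl, rfl⟩
    · exact invp_vac (by simp) (by simp) (by simp) (by simp) (by simp)
    · rcases hΨ Fm.one (by simp) with ⟨p, Y', hE⟩ | ⟨p, q, B1, C1, hE⟩ <;> cases hE
    · obtain ⟨n, hn⟩ := hΓ Fm.one (by simp)
      cases hn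
  | oneR =>
    intro hC Γ A Ψ h hΓ hΨ
    rcases hC with ⟨n, hn⟩ | hn <;> cases hn
  | bangL n Γ₀ Δ X C0 d ih =>
    intro hC Γ A Ψ h hΓ hΨ
    rcases three_way h.symm with ⟨rfl, rfl, rfl⟩ | ⟨Ψ₁, rfl, rfl⟩ | ⟨Γ₁, rfl, rfl⟩
    · exact invp_bang ⟨n, d⟩
    · rcases hΨ (Fm.bang X) (by simp) with ⟨p, Y', hE⟩ | ⟨p, q, B1, C1, hE⟩ <;> cases hE
    · obtain ⟨m, hn⟩ := hΓ (Fm.bang X) (by simp)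
      cases hn
  | bangR X Y d ih =>
    intro hC Γ A Ψ h hΓ hΨ
    rcases hC with ⟨n, hn⟩ | hn <;> cases hn
  | starL Γ₀ Δ X C0 d ih =>
    intro hC Γ A Ψ h hΓ hΨ
    rcases three_way h.symm with ⟨rfl, rfl, rfl⟩ | ⟨Ψ₁, rfl, rfl⟩ | ⟨Γ₁, rfl, rfl⟩
    · exact invp_star d
    · rcases hΨ (Fm.star X) (by simp) with ⟨p, Y', hE⟩ | ⟨p, q, B1, C1, hE⟩ <;> cases hE
    · obtain ⟨m, hn⟩ := hΓ (Fm.star X) (by simp)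
      cases hn
  | starR Ps X d ih =>
    intro hC Γ A Ψ h hΓ hΨ
    rcases hC with ⟨n, hn⟩ | hn <;> cases hn
  | nablaL Γ₀ Δ X C0 d ih =>
    intro hC Γ A Ψ h hΓ hΨ
    rcases three_way h.symm with ⟨rfl, rfl, rfl⟩ | ⟨Ψ₁, rfl, rfl⟩ | ⟨Γ₁, rfl, rfl⟩
    · exact invp_vac (by simp) (by simp) (by simp) (by simp) (by simp)
    · rcases hΨ (Fm.nabla X) (by simp) with ⟨p, Y', hE⟩ | ⟨p, q, B1, C1, hE⟩ <;> cases hE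
    · obtain ⟨m, hn⟩ := hΓ (Fm.nabla X) (by simp)
      cases hn
  | nablaR X Y d ih =>
    intro hC Γ A Ψ h hΓ hΨ
    rcases hC with ⟨n, hn⟩ | hn <;> cases hn
  | nablaP1 Γ₀ Pi Δ X C0 d ih =>
    intro hC Γ A Ψ h hΓ hΨ
    have h' : Γ ++ [A] ++ Ψ = Γ₀ ++ [Fm.nabla X] ++ (Pi ++ Δ) := by
      rw [← h]; simp [List.append_assoc]
    rcases three_way h' with ⟨rfl, rfl, rfl⟩ | ⟨Ψ₁, hG, rfl⟩ | ⟨Γ₁, rfl, hH⟩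
    · exact invp_vac (by simp) (by simp) (by simp) (by simp) (by simp)
    · rcases hΨ (Fm.nabla X) (by simp) with ⟨p, Y', hE⟩ | ⟨p, q, B1, C1, hE⟩ <;> cases hE
    · obtain ⟨m, hn⟩ := hΓ (Fm.nabla X) (by simp)
      cases hn
  | nablaP2 Γ₀ Pi Δ X C0 d ih =>
    intro hC Γ A Ψ h hΓ hΨ
    have h' : Γ ++ [A] ++ Ψ = (Γ₀ ++ Pi) ++ [Fm.nabla X] ++ Δ := h.symm
    rcases three_way h' with ⟨rfl, rfl, rfl⟩ | ⟨Ψ₁, hG, rfl⟩ | ⟨Γ₁, rfl, rfl⟩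
    · exact invp_vac (by simp) (by simp) (by simp) (by simp) (by simp)
    · rcases hΨ (Fm.nabla X) (by simp) with ⟨p, Y', hE⟩ | ⟨p, q, B1, C1, hE⟩ <;> cases hE
    · obtain ⟨m, hn⟩ := hΓ (Fm.nabla X) (by simp)
      cases hn

/-- bottom-top analysis, part 1. -/
theorem bottom_top_analysis_part1 (Γ Ψ : List Fm)
    (hΓ : PrimSeq Γ) (hΨ : LockedSeq Ψ) :
    (∀ (p : ℕ) (B : Fm),
        Deriv (Γ ++ [Fm.lDiv (Fm.atom p) B] ++ Ψ) (Fm.mul aL okF) ↔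
        ∃ Γ' : List Fm, Γ = Γ' ++ [Fm.atom p] ∧
          Deriv (Γ' ++ [B] ++ Ψ) (Fm.mul aL okF)) ∧
    (∀ A₁ A₂ : Fm,
        Deriv (Γ ++ [Fm.mul A₁ A₂] ++ Ψ) (Fm.mul aL okF) ↔
        Deriv (Γ ++ [A₁, A₂] ++ Ψ) (Fm.mul aL okF)) ∧
    (∀ A₁ A₂ : Fm,
        Deriv (Γ ++ [Fm.and A₁ A₂] ++ Ψ) (Fm.mul aL okF) ↔
        (Deriv (Γ ++ [A₁] ++ Ψ) (Fm.mul aL okF) ∨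
         Deriv (Γ ++ [A₂] ++ Ψ) (Fm.mul aL okF))) ∧
    (∀ B : Fm,
        Deriv (Γ ++ [Fm.bang B] ++ Ψ) (Fm.mul aL okF) ↔
        ∃ n : ℕ, Deriv (Γ ++ List.replicate n B ++ Ψ) (Fm.mul aL okF)) ∧
    (∀ B : Fm,
        Deriv (Γ ++ [Fm.star B] ++ Ψ) (Fm.mul aL okF) ↔
        ∀ n : ℕ, Deriv (Γ ++ List.replicate n B ++ Ψ) (Fm.mul aL okF)) := by
  refine ⟨?_, ?_, ?_, ?_, ?_⟩
  · intro p B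
    constructor
    · intro d
      exact (main_inv d (Or.inr rfl) Γ (Fm.lDiv (Fm.atom p) B) Ψ rfl hΓ hΨ).1 p B rfl
    · rintro ⟨Γ', rfl, d⟩
      have := Deriv.lDivL Γ' [Fm.atom p] Ψ B (Fm.atom p) (Fm.mul aL okF) d
        (Deriv.ax (Fm.atom p))
      simpa [List.append_assoc] using this
  · intro A₁ A₂
    constructor
    · intro d
      exact (main_inv d (Or.inr rfl) Γ (Fm.mul A₁ A₂) Ψ rfl hΓ hΨ).2.1 A₁ A₂ rfl
    · intro d
      exact Deriv.mulL Γ Ψ A₁ A₂ (Fm.mul aL okF) d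
  · intro A₁ A₂
    constructor
    · intro d
      exact (main_inv d (Or.inr rfl) Γ (Fm.and A₁ A₂) Ψ rfl hΓ hΨ).2.2.1 A₁ A₂ rfl
    · rintro (d | d)
      · exact Deriv.andL1 Γ Ψ A₁ A₂ (Fm.mul aL okF) d
      · exact Deriv.andL2 Γ Ψ A₁ A₂ (Fm.mul aL okF) d
  · intro B
    constructor
    · intro d
      exact (main_inv d (Or.inr rfl) Γ (Fm.bang B) Ψ rfl hΓ hΨ).2.2.2.1 B rfl
    · rintro ⟨n, d⟩
      exact Deriv.bangL n Γ Ψ B (Fm.mul aL okF) d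
  · intro B
    constructor
    · intro d
      exact (main_inv d (Or.inr rfl) Γ (Fm.star B) Ψ rfl hΓ hΨ).2.2.2.2 B rfl
    · intro d
      exact Deriv.starL Γ Ψ B (Fm.mul aL okF) d
end
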